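/- arXiv:2004.08039 — 5 statements merged into one kernel-verified Lean document; each statement's English description precedes it below -/
import Mathlib

section
/- Suppose n players each perform c-backoff and each broadcasts at most c·log_c τ times in the interval (τ', τ] where τ' = τ/c. Call a step s ∈ (τ', τ] heavy if the expected number of broadcasts at step s exceeds (1/c)·log τ, and light otherwise. Then the number of heavy steps in (τ', τ] is at most c²n/log c; consequently, if c ≥ 16 and c²n ≤ τ, at least half of the steps in (τ', τ] are light. -/
/-- Suppose `n` players perform `c`-backoff and the total contention
over the interval `(τ', τ]` (with `τ = c·τ'`) is at most `c·n·log_c τ`, where `f s`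
denotes the contention (expected number of broadcasts) at step `s`. Call a step
`s ∈ (τ', τ]` heavy if `f s > (1/c)·log τ` and light otherwise. Then the number of
heavy steps is at most `c²·n / log c`; consequently, if `c ≥ 16` and `c²·n ≤ τ`, at
least half of the steps in `(τ', τ]` are light. -/
theorem heavy_steps_bound
    (c n τ' τ : ℕ) (hττ' : τ = c * τ') (hτ'pos : 0 < τ')
    (f : ℕ → ℝ) (hf0 : ∀ s, 0 ≤ f s)
    (hsum : ∑ s ∈ Finset.Ioc τ' τ, f s ≤ (c : ℝ) * n * Real.logb c τ) :
    (((Finset.Ioc τ' τ).filter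
        (fun s => (1 / (c : ℝ)) * Real.logb 2 τ < f s)).card : ℝ)
      ≤ (c : ℝ) ^ 2 * n / Real.logb 2 c ∧
    (16 ≤ c → c ^ 2 * n ≤ τ →
      ((τ - τ' : ℕ) : ℝ) / 2 ≤
        (((Finset.Ioc τ' τ).filter
            (fun s => f s ≤ (1 / (c : ℝ)) * Real.logb 2 τ)).card : ℝ)) := by
  by_cases hc : 2 ≤ c
  · -- main case
    have hτ2 : 2 ≤ τ := by
      have : 2 * 1 ≤ c * τ' := Nat.mul_le_mul hc hτ'pos
      omega
    have hcR : (2:ℝ) ≤ (c:ℝ) := by exact_mod_cast hc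
    have hτR : (2:ℝ) ≤ (τ:ℝ) := by exact_mod_cast hτ2
    have hlogc : 0 < Real.log c := Real.log_pos (by linarith)
    have hlogτ : 0 < Real.log τ := Real.log_pos (by linarith)
    have hlog2 : 0 < Real.log 2 := Real.log_pos (by norm_num)
    set t : ℝ := (1 / (c : ℝ)) * Real.logb 2 τ with ht
    have htpos : 0 < t := by
      apply mul_pos (by positivity)
      exact div_pos hlogτ hlog2
    set H := (Finset.Ioc τ' τ).filter (fun s => t < f s) with hH
    have hkey : (H.card : ℝ) * t ≤ (c : ℝ) * n * Real.logb c τ := by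
      calc (H.card : ℝ) * t = ∑ _s ∈ H, t := by rw [Finset.sum_const, nsmul_eq_mul]
        _ ≤ ∑ s ∈ H, f s := Finset.sum_le_sum fun s hs => le_of_lt (Finset.mem_filter.mp hs).2
        _ ≤ ∑ s ∈ Finset.Ioc τ' τ, f s :=
            Finset.sum_le_sum_of_subset_of_nonneg (Finset.filter_subset _ _) fun i _ _ => hf0 i
        _ ≤ _ := hsum
    have hlogb2c : Real.logb 2 c = Real.log c / Real.log 2 := rfl
    have hmain : (H.card : ℝ) ≤ (c : ℝ) ^ 2 * n / Real.logb 2 c := by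
      have hcne : (c:ℝ) ≠ 0 := by linarith
      have h2 := mul_le_mul_of_nonneg_right hkey
        (show (0:ℝ) ≤ (c:ℝ) * Real.log 2 * Real.log c by positivity)
      have e1 : (H.card : ℝ) * t * ((c:ℝ) * Real.log 2 * Real.log c)
          = (H.card : ℝ) * Real.log c * Real.log τ := by
        rw [ht]; unfold Real.logb; field_simp
      have e2 : (c : ℝ) * n * Real.logb c τ * ((c:ℝ) * Real.log 2 * Real.log c)
          = ((c:ℝ)^2 * n * Real.log 2) * Real.log τ := by
        unfold Real.logb; field_simp
      rw [e1, e2] at h2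
      have h3 : (H.card : ℝ) * Real.log c ≤ (c:ℝ)^2 * n * Real.log 2 :=
        le_of_mul_le_mul_right h2 hlogτ
      rw [hlogb2c, le_div_iff₀ (div_pos hlogc hlog2), ← mul_div_assoc,
        div_le_iff₀ hlog2]
      linarith
    refine ⟨hmain, fun h16 hτn => ?_⟩
    -- second part
    have h16R : (16:ℝ) ≤ (c:ℝ) := by exact_mod_cast h16
    have hlogb2c4 : (4:ℝ) ≤ Real.logb 2 c := by
      have hmono : Real.logb 2 16 ≤ Real.logb 2 c :=
        Real.logb_le_logb_of_le (by norm_num) (by norm_num) (by exact_mod_cast h16)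
      have h16eq : Real.logb 2 16 = 4 := by
        rw [show (16:ℝ) = 2^(4:ℕ) by norm_num, Real.logb_pow,
          Real.logb_self_eq_one (by norm_num)]
        norm_num
      linarith
    have hτnR : ((c:ℝ)^2 * n) ≤ (τ:ℝ) := by exact_mod_cast hτn
    have hHle : (H.card : ℝ) ≤ (τ:ℝ) / 4 := by
      calc (H.card : ℝ) ≤ (c:ℝ)^2 * n / Real.logb 2 c := hmain
        _ ≤ (τ:ℝ) / 4 := by
            apply div_le_div₀ (by positivity) hτnR (by norm_num) hlogb2c4
    -- light = total - heavy
    have hsplit := Finset.card_filter_add_card_filter_not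
      (s := Finset.Ioc τ' τ) (p := fun s => t < f s)
    simp only [not_lt] at hsplit
    have hcardIoc : (Finset.Ioc τ' τ).card = τ - τ' := Nat.card_Ioc τ' τ
    have hτ'le : τ' ≤ τ := by nlinarith
    have hsub : ((τ - τ' : ℕ) : ℝ) = (τ:ℝ) - τ' := by
      rw [Nat.cast_sub hτ'le]
    have hτ'half : (τ':ℝ) ≤ (τ:ℝ)/2 := by
      have : (2:ℝ) * τ' ≤ (c:ℝ) * τ' := by
        apply mul_le_mul_of_nonneg_right hcR (by positivity)
      have hττ'R : (τ:ℝ) = (c:ℝ) * τ' := by exact_mod_cast hττ'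
      linarith
    have hlight : ((H.card : ℝ)) +
        (((Finset.Ioc τ' τ).filter (fun s => f s ≤ t)).card : ℝ) = ((τ - τ':ℕ):ℝ) := by
      rw [← hcardIoc]
      exact_mod_cast congrArg (Nat.cast (R := ℝ)) hsplit
    rw [hsub] at hlight ⊢
    linarith
  · -- degenerate case: c ≤ 1
    have hτle : τ ≤ τ' := by
      rw [hττ']; interval_cases c <;> omega
    have hempty : Finset.Ioc τ' τ = ∅ := Finset.Ioc_eq_empty (by omega)
    rw [hempty]
    constructor
    · have hlz : Real.logb 2 c = 0 := by
        interval_cases c <;> simp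
      simp [hlz]
    · intro h16 _; omega
end

section
/- (McDiarmid bounded-differences inequality) Let X₁, …, X_m be independent random variables and F a function with the property that changing the value of any one coordinate changes F by at most c. Then for all R > 0, Pr[F(X₁,…,X_m) − E[F] ≥ R] ≤ exp(−2R²/(c²m)) and Pr[F(X₁,…,X_m) − E[F] ≤ −R] ≤ exp(−2R²/(c²m)). -/
open MeasureTheory ProbabilityTheory

open Real Set

private lemma mcd_key_ineq {p : ℝ} (hp0 : 0 ≤ p) (hp1 : p ≤ 1) (h : ℝ) :
    1 - p + p * Real.exp h ≤ Real.exp (p * h + h ^ 2 / 8) := by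
  set F1 : ℝ → ℝ := fun h => 1 - p + p * Real.exp h with hF1
  have hpos : ∀ x : ℝ, 0 < F1 x := by
    intro x
    rcases eq_or_lt_of_le hp1 with h1 | h1
    · simp only [hF1]; rw [h1]; simpa using Real.exp_pos x
    · have := Real.exp_pos x
      have : 0 ≤ p * Real.exp x := by positivity
      simp only [hF1]; nlinarith
  set χ : ℝ → ℝ := fun h => p * h + h ^ 2 / 8 - Real.log (F1 h) with hχ
  set χ₁ : ℝ → ℝ := fun h => p + h / 4 - p * Real.exp h / F1 h with hχ₁
  set χ₂ : ℝ → ℝ := fun h => 1 / 4 - p * Real.exp h * (1 - p) / (F1 h) ^ 2 with hχ₂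
  have hF1d : ∀ x : ℝ, HasDerivAt F1 (p * Real.exp x) x := by
    intro x
    exact ((Real.hasDerivAt_exp x).const_mul p).const_add (1 - p)
  have hχd : ∀ x : ℝ, HasDerivAt χ (χ₁ x) x := by
    intro x
    have hlog : HasDerivAt (fun y => Real.log (F1 y)) ((F1 x)⁻¹ * (p * Real.exp x)) x :=
      (Real.hasDerivAt_log (hpos x).ne').comp x (hF1d x)
    have hlin : HasDerivAt (fun y : ℝ => p * y + y ^ 2 / 8) (p * 1 + 2 * x ^ 1 / 8) x := by
      simpa using ((hasDerivAt_id x).const_mul p).fun_add ((hasDerivAt_pow 2 x).div_const 8)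
    have := hlin.fun_sub hlog
    refine this.congr_deriv ?_
    simp only [hχ₁]
    field_simp
    ring
  have hχ₁d : ∀ x : ℝ, HasDerivAt χ₁ (χ₂ x) x := by
    intro x
    have hdiv : HasDerivAt (fun y => p * Real.exp y / F1 y)
        ((p * Real.exp x * F1 x - p * Real.exp x * (p * Real.exp x)) / (F1 x) ^ 2) x :=
      ((Real.hasDerivAt_exp x).const_mul p).div (hF1d x) (hpos x).ne'
    have hlin : HasDerivAt (fun y : ℝ => p + y / 4) (1 / 4) x := by
      simpa using ((hasDerivAt_id x).div_const 4).const_add p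
    have := hlin.fun_sub hdiv
    refine this.congr_deriv ?_
    simp only [hχ₂, hF1]
    have h0 := (hpos x).ne'
    field_simp
    ring
  have hχ₂nn : ∀ x : ℝ, 0 ≤ χ₂ x := by
    intro x
    have h0 : 0 < (F1 x) ^ 2 := pow_pos (hpos x) 2
    simp only [hχ₂]
    rw [sub_nonneg, div_le_iff₀ h0]
    have hsq := sq_nonneg ((1 - p) - p * Real.exp x)
    simp only [hF1]
    nlinarith
  have hχ₁mono : Monotone χ₁ := by
    apply monotone_of_deriv_nonneg
    · exact fun x => (hχ₁d x).differentiableAt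
    · intro x
      rw [(hχ₁d x).deriv]
      exact hχ₂nn x
  have hχ₁zero : χ₁ 0 = 0 := by
    simp only [hχ₁, hF1]
    simp
  have hχzero : χ 0 = 0 := by
    simp only [hχ, hF1]
    simp
  have hχdiff : Differentiable ℝ χ := fun x => (hχd x).differentiableAt
  have hkey : 0 ≤ χ h := by
    rcases le_total 0 h with hh | hh
    · have hmono : MonotoneOn χ (Ici (0:ℝ)) := by
        apply monotoneOn_of_deriv_nonneg (convex_Ici 0) hχdiff.continuous.continuousOn
          (hχdiff.differentiableOn)
        intro x hx
        rw [interior_Ici] at hx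
        rw [(hχd x).deriv, ← hχ₁zero]
        exact hχ₁mono (le_of_lt hx)
      have := hmono (self_mem_Ici) (by exact hh) hh
      rwa [hχzero] at this
    · have hanti : AntitoneOn χ (Iic (0:ℝ)) := by
        apply antitoneOn_of_deriv_nonpos (convex_Iic 0) hχdiff.continuous.continuousOn
          (hχdiff.differentiableOn)
        intro x hx
        rw [interior_Iic] at hx
        rw [(hχd x).deriv, ← hχ₁zero]
        exact hχ₁mono (le_of_lt hx)
      have := hanti (by exact hh) (self_mem_Iic) hh
      rwa [hχzero] at this
  have : Real.log (F1 h) ≤ p * h + h ^ 2 / 8 := by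
    simp only [hχ] at hkey; linarith
  exact (Real.log_le_iff_le_exp (hpos h)).mp this

private lemma mcd_integrable_of_bdd {α : Type*} [MeasurableSpace α] {μ : Measure α}
    [IsFiniteMeasure μ] {f : α → ℝ} (hf : AEStronglyMeasurable f μ) {C : ℝ}
    (h : ∀ x, |f x| ≤ C) : Integrable f μ :=
  (integrable_const C).mono' hf (Filter.Eventually.of_forall (fun x => by
    simpa using h x))

private lemma mcd_hoeffding {α : Type*} [MeasurableSpace α] (μ : Measure α)
    [IsProbabilityMeasure μ] {f : α → ℝ} (hf : Measurable f) {a b : ℝ}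
    (hab : ∀ x, f x ∈ Set.Icc a b) (hmean : ∫ x, f x ∂μ = 0) (t : ℝ) :
    ∫ x, Real.exp (t * f x) ∂μ ≤ Real.exp (t ^ 2 * (b - a) ^ 2 / 8) := by
  have hfint : Integrable f μ := mcd_integrable_of_bdd hf.aestronglyMeasurable
    (fun x => abs_le_max_abs_abs (hab x).1 (hab x).2)
  have ha0 : a ≤ 0 := by
    have : ∫ _x, a ∂μ ≤ ∫ x, f x ∂μ :=
      integral_mono (integrable_const a) hfint (fun x => (hab x).1)
    simpa [hmean] using this
  have hb0 : 0 ≤ b := by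
    have : ∫ x, f x ∂μ ≤ ∫ _x, b ∂μ :=
      integral_mono hfint (integrable_const b) (fun x => (hab x).2)
    simpa [hmean] using this
  rcases eq_or_lt_of_le (ha0.trans hb0) with hab0 | hlt
  · have ha : a = 0 := by linarith
    have hb : b = 0 := by linarith
    have hfx : ∀ x, f x = 0 := fun x =>
      le_antisymm ((hab x).2.trans hb.le) (ha ▸ (hab x).1)
    simp only [hfx, mul_zero, Real.exp_zero, integral_const, measure_univ,
      ENNReal.toReal_one, smul_eq_mul, mul_one, ha, hb]
    simp
  · set p : ℝ := -a / (b - a) with hp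
    have hba : 0 < b - a := by linarith
    have hp0 : 0 ≤ p := div_nonneg (by linarith) (by linarith)
    have hp1 : p ≤ 1 := by rw [hp, div_le_one hba]; linarith
    set h : ℝ := t * (b - a) with hh
    -- pointwise convexity bound
    have hconv : ∀ x, Real.exp (t * f x) ≤
        (Real.exp (t * b) / (b - a) - Real.exp (t * a) / (b - a)) * f x
          + (b * (Real.exp (t * a) / (b - a)) - a * (Real.exp (t * b) / (b - a))) := by
      intro x
      have h1 : (0:ℝ) ≤ (b - f x) / (b - a) :=
        div_nonneg (by linarith [(hab x).2]) hba.le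
      have h2 : (0:ℝ) ≤ (f x - a) / (b - a) :=
        div_nonneg (by linarith [(hab x).1]) hba.le
      have h3 : (b - f x) / (b - a) + (f x - a) / (b - a) = 1 := by
        field_simp
        ring
      have := convexOn_exp.2 (Set.mem_univ (t * a)) (Set.mem_univ (t * b)) h1 h2 h3
      have harg : ((b - f x) / (b - a)) • (t * a) + ((f x - a) / (b - a)) • (t * b) = t * f x := by
        simp only [smul_eq_mul]
        field_simp
        ring
      rw [harg] at this
      refine this.trans (le_of_eq ?_)
      simp only [smul_eq_mul]
      field_simp
      ring
    have hexp_int : Integrable (fun x => Real.exp (t * f x)) μ := by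
      apply mcd_integrable_of_bdd ((hf.const_mul t).exp).aestronglyMeasurable
        (C := Real.exp (|t| * (|a| + |b|)))
      intro x
      rw [abs_of_nonneg (Real.exp_nonneg _)]
      apply Real.exp_le_exp.mpr
      calc t * f x ≤ |t * f x| := le_abs_self _
        _ = |t| * |f x| := abs_mul t (f x)
        _ ≤ |t| * (|a| + |b|) := by
            apply mul_le_mul_of_nonneg_left _ (abs_nonneg t)
            refine (abs_le_max_abs_abs (hab x).1 (hab x).2).trans ?_
            exact max_le (by simp [abs_nonneg]) (by simp [abs_nonneg])
    have hrhs_int : Integrable (fun x =>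
        (Real.exp (t * b) / (b - a) - Real.exp (t * a) / (b - a)) * f x
          + (b * (Real.exp (t * a) / (b - a)) - a * (Real.exp (t * b) / (b - a)))) μ :=
      (hfint.const_mul _).add (integrable_const _)
    have hstep1 : ∫ x, Real.exp (t * f x) ∂μ ≤
        b * (Real.exp (t * a) / (b - a)) - a * (Real.exp (t * b) / (b - a)) := by
      calc ∫ x, Real.exp (t * f x) ∂μ
          ≤ ∫ x, ((Real.exp (t * b) / (b - a) - Real.exp (t * a) / (b - a)) * f x
              + (b * (Real.exp (t * a) / (b - a)) - a * (Real.exp (t * b) / (b - a)))) ∂μ :=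
            integral_mono hexp_int hrhs_int hconv
        _ = (Real.exp (t * b) / (b - a) - Real.exp (t * a) / (b - a)) * (∫ x, f x ∂μ)
              + (b * (Real.exp (t * a) / (b - a)) - a * (Real.exp (t * b) / (b - a))) := by
            rw [integral_add (hfint.const_mul _) (integrable_const _),
              integral_const_mul, integral_const]
            simp
        _ = _ := by rw [hmean]; ring
    have hstep2 : b * (Real.exp (t * a) / (b - a)) - a * (Real.exp (t * b) / (b - a))
        = Real.exp (t * a) * (1 - p + p * Real.exp h) := by
      have : Real.exp (t * b) = Real.exp (t * a) * Real.exp h := by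
        rw [← Real.exp_add]; congr 1; rw [hh]; ring
      rw [this, hp]
      field_simp
      ring
    have hkey := mcd_key_ineq hp0 hp1 h
    have hstep3 : Real.exp (t * a) * (1 - p + p * Real.exp h)
        ≤ Real.exp (t * a) * Real.exp (p * h + h ^ 2 / 8) :=
      mul_le_mul_of_nonneg_left hkey (Real.exp_nonneg _)
    have hstep4 : Real.exp (t * a) * Real.exp (p * h + h ^ 2 / 8)
        = Real.exp (t ^ 2 * (b - a) ^ 2 / 8) := by
      rw [← Real.exp_add]
      congr 1
      rw [hp, hh]
      field_simp
      ring
    calc ∫ x, Real.exp (t * f x) ∂μ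
        ≤ b * (Real.exp (t * a) / (b - a)) - a * (Real.exp (t * b) / (b - a)) := hstep1
      _ = Real.exp (t * a) * (1 - p + p * Real.exp h) := hstep2
      _ ≤ Real.exp (t * a) * Real.exp (p * h + h ^ 2 / 8) := hstep3
      _ = Real.exp (t ^ 2 * (b - a) ^ 2 / 8) := hstep4

universe u

private lemma mcd_integrable_exp {α : Type*} [MeasurableSpace α] {μ : Measure α}
    [IsFiniteMeasure μ] {φ : α → ℝ} (hφ : AEStronglyMeasurable φ μ) {K : ℝ}
    (hK : ∀ x, |φ x| ≤ K) (t : ℝ) : Integrable (fun x => Real.exp (t * φ x)) μ := by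
  apply mcd_integrable_of_bdd (C := Real.exp (|t| * K))
    (Real.continuous_exp.comp_aestronglyMeasurable (hφ.const_mul t))
  intro x
  rw [abs_of_nonneg (Real.exp_nonneg _)]
  apply Real.exp_le_exp.mpr
  calc t * φ x ≤ |t * φ x| := le_abs_self _
    _ = |t| * |φ x| := abs_mul t (φ x)
    _ ≤ |t| * K := mul_le_mul_of_nonneg_left (hK x) (abs_nonneg t)

private lemma mcd_nonempty {α : Type*} [MeasurableSpace α] (μ : Measure α)
    [IsProbabilityMeasure μ] : Nonempty α := by
  by_contra hne
  rw [not_nonempty_iff] at hne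
  have h1 : μ Set.univ = 1 := measure_univ
  rw [Set.univ_eq_empty_iff.mpr hne, measure_empty] at h1
  exact zero_ne_one h1

private lemma mcd_osc {m : ℕ} {𝒳 : Fin m → Type u} (G : (∀ i, 𝒳 i) → ℝ) (c : ℝ)
    (hbdd : ∀ (x y : ∀ i, 𝒳 i) (i : Fin m), (∀ j, j ≠ i → x j = y j) → |G x - G y| ≤ c)
    (hc : 0 ≤ c) :
    ∀ (s : Finset (Fin m)) (x y : ∀ i, 𝒳 i), (∀ j ∉ s, x j = y j) →
      |G x - G y| ≤ c * s.card := by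
  intro s
  induction s using Finset.induction_on with
  | empty =>
    intro x y hxy
    have : x = y := funext fun j => hxy j (Finset.notMem_empty j)
    simp [this]
  | @insert a s ha ih =>
    intro x y hxy
    set z : ∀ i, 𝒳 i := Function.update x a (y a) with hz
    have h1 : |G x - G z| ≤ c := by
      apply hbdd x z a
      intro j hj
      rw [hz, Function.update_of_ne hj]
    have h2 : |G z - G y| ≤ c * s.card := by
      apply ih z y
      intro j hj
      rcases eq_or_ne j a with rfl | hja
      · rw [hz, Function.update_self]
      · rw [hz, Function.update_of_ne hja]
        exact hxy j (by simp [hja, hj])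
    calc |G x - G y| ≤ |G x - G z| + |G z - G y| := abs_sub_le _ _ _
      _ ≤ c + c * s.card := add_le_add h1 h2
      _ = c * (insert a s).card := by
          rw [Finset.card_insert_of_notMem ha]
          push_cast
          ring

private theorem mcd_mgf_bound : ∀ (m : ℕ) {𝒳 : Fin m → Type u}
    [inst : ∀ i, MeasurableSpace (𝒳 i)]
    (ν : ∀ i, Measure (𝒳 i)) [hprob : ∀ i, IsProbabilityMeasure (ν i)]
    (G : (∀ i, 𝒳 i) → ℝ) (hG : Measurable G) (c : ℝ) (hc : 0 ≤ c)
    (hbdd : ∀ (x y : ∀ i, 𝒳 i) (i : Fin m), (∀ j, j ≠ i → x j = y j) → |G x - G y| ≤ c)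
    (t : ℝ),
    ∫ x, Real.exp (t * (G x - ∫ y, G y ∂(Measure.pi ν))) ∂(Measure.pi ν)
      ≤ Real.exp (t ^ 2 * c ^ 2 * m / 8) := by
  intro m
  induction m with
  | zero =>
    intro 𝒳 inst ν hprob G hG c hc hbdd t
    haveI : Subsingleton (∀ i : Fin 0, 𝒳 i) :=
      ⟨fun x y => funext fun i => i.elim0⟩
    have x₀ : ∀ i : Fin 0, 𝒳 i := fun i => i.elim0
    have hGconst : ∀ x, G x = G x₀ := fun x => congrArg G (Subsingleton.elim x x₀)
    have hint : ∫ y, G y ∂(Measure.pi ν) = G x₀ := by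
      simp only [hGconst]
      simp [integral_const]
    simp only [hGconst, hint, sub_self, mul_zero, Real.exp_zero]
    simp [integral_const]
  | succ m ih =>
    intro 𝒳 inst ν hprob G hG c hc hbdd t
    haveI hne : ∀ i, Nonempty (𝒳 i) := fun i => mcd_nonempty (ν i)
    set xbar : ∀ i, 𝒳 i := fun i => Classical.arbitrary _ with hxbar
    set K : ℝ := |G xbar| + c * (m + 1) with hK
    have hGbdd : ∀ x, |G x| ≤ K := by
      intro x
      have h1 := mcd_osc G c hbdd hc Finset.univ x xbar (by simp)
      rw [Finset.card_univ, Fintype.card_fin] at h1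
      calc |G x| = |G xbar + (G x - G xbar)| := by ring_nf
        _ ≤ |G xbar| + |G x - G xbar| := abs_add_le _ _
        _ ≤ K := by rw [hK]; push_cast; push_cast at h1; linarith
    set i0 : Fin (m + 1) := 0 with hi0
    set ν' : ∀ j : Fin m, Measure (𝒳 (i0.succAbove j)) := fun j => ν (i0.succAbove j) with hν'
    set e := MeasurableEquiv.piFinSuccAbove 𝒳 i0 with he
    have hMP := measurePreserving_piFinSuccAbove ν i0
    set H : 𝒳 i0 × (∀ j, 𝒳 (i0.succAbove j)) → ℝ := fun z => G (e.symm z) with hH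
    have hHm : Measurable H := hG.comp e.symm.measurable
    have hesymm : ∀ (x₀ : 𝒳 i0) (y : ∀ j, 𝒳 (i0.succAbove j)),
        e.symm (x₀, y) = i0.insertNth x₀ y := fun _ _ => rfl
    have hHbdd : ∀ z, |H z| ≤ K := fun z => hGbdd _
    set M : ℝ := ∫ x, G x ∂(Measure.pi ν) with hM
    have hcomp : ∀ (φ : (∀ i, 𝒳 i) → ℝ),
        ∫ x, φ x ∂(Measure.pi ν) = ∫ z, φ (e.symm z) ∂((ν i0).prod (Measure.pi ν')) := by
      intro φ
      rw [← hMP.integral_comp e.measurableEmbedding (fun z => φ (e.symm z))]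
      rw [← he]
      simp only [MeasurableEquiv.symm_apply_apply]
    set g : (∀ j, 𝒳 (i0.succAbove j)) → ℝ := fun y => ∫ x₀, H (x₀, y) ∂(ν i0) with hg
    have hgm : Measurable g :=
      (hHm.stronglyMeasurable.integral_prod_left').measurable
    have hgbdd : ∀ y, |g y| ≤ K := by
      intro y
      have := norm_integral_le_of_norm_le_const (μ := ν i0)
        (f := fun x₀ => H (x₀, y)) (C := K)
        (Filter.Eventually.of_forall fun x₀ => by simpa using hHbdd (x₀, y))
      simpa using this
    have hsecm : ∀ y, Measurable (fun x₀ => H (x₀, y)) :=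
      fun y => hHm.comp (measurable_id.prodMk measurable_const)
    have hsec_int : ∀ y, Integrable (fun x₀ => H (x₀, y)) (ν i0) :=
      fun y => mcd_integrable_of_bdd (hsecm y).aestronglyMeasurable
        (fun x₀ => hHbdd (x₀, y))
    -- section bounded differences in first coordinate
    have hsecbdd : ∀ y x₀ z₀, |H (x₀, y) - H (z₀, y)| ≤ c := by
      intro y x₀ z₀
      rw [hH]
      simp only [hesymm]
      apply hbdd _ _ i0
      intro j hj
      obtain ⟨k, rfl⟩ := Fin.exists_succAbove_eq hj
      rw [Fin.insertNth_apply_succAbove, Fin.insertNth_apply_succAbove]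
    -- g has bounded differences
    have hbdd_g : ∀ (y y' : ∀ j, 𝒳 (i0.succAbove j)) (j : Fin m),
        (∀ k, k ≠ j → y k = y' k) → |g y - g y'| ≤ c := by
      intro y y' j hyy
      have hptw : ∀ x₀, |H (x₀, y) - H (x₀, y')| ≤ c := by
        intro x₀
        rw [hH]
        simp only [hesymm]
        apply hbdd _ _ (i0.succAbove j)
        intro i hi
        rcases eq_or_ne i i0 with rfl | hii0
        · rw [Fin.insertNth_apply_same, Fin.insertNth_apply_same]
        · obtain ⟨k, rfl⟩ := Fin.exists_succAbove_eq hii0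
          rw [Fin.insertNth_apply_succAbove, Fin.insertNth_apply_succAbove]
          apply hyy
          intro hkj
          exact hi (by rw [hkj])
      rw [hg]
      simp only
      rw [← integral_sub (hsec_int y) (hsec_int y')]
      have h1 := norm_integral_le_of_norm_le_const (μ := ν i0)
        (f := fun x₀ => H (x₀, y) - H (x₀, y')) (C := c)
        (Filter.Eventually.of_forall fun x₀ => by simpa using hptw x₀)
      simpa using h1
    -- mean of sections
    have hsec_mean : ∀ y, ∫ x₀, (H (x₀, y) - g y) ∂(ν i0) = 0 := by
      intro y
      rw [integral_sub (hsec_int y) (integrable_const _), integral_const]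
      simp [hg]
    -- inner Hoeffding bound
    have hinner : ∀ y, ∫ x₀, Real.exp (t * (H (x₀, y) - M)) ∂(ν i0)
        ≤ Real.exp (t * (g y - M)) * Real.exp (t ^ 2 * c ^ 2 / 8) := by
      intro y
      set f : 𝒳 i0 → ℝ := fun x₀ => H (x₀, y) - g y with hf
      have hfm : Measurable f := (hsecm y).sub measurable_const
      have hfd : ∀ u v, |f u - f v| ≤ c := by
        intro u v
        rw [hf]
        simpa using hsecbdd y u v
      obtain ⟨w₀⟩ := hne i0
      have hbddA : BddAbove (Set.range f) := by
        refine ⟨f w₀ + c, ?_⟩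
        rintro _ ⟨u, rfl⟩
        have := hfd u w₀
        rw [abs_le] at this
        linarith [this.2]
      have hbddB : BddBelow (Set.range f) := by
        refine ⟨f w₀ - c, ?_⟩
        rintro _ ⟨u, rfl⟩
        have := hfd u w₀
        rw [abs_le] at this
        linarith [this.1]
      set a : ℝ := sInf (Set.range f) with ha
      set b : ℝ := sSup (Set.range f) with hb
      have hmem : ∀ u, f u ∈ Set.Icc a b := fun u =>
        ⟨csInf_le hbddB ⟨u, rfl⟩, le_csSup hbddA ⟨u, rfl⟩⟩
      have hba : b - a ≤ c := by
        rw [sub_le_iff_le_add, hb]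
        apply csSup_le (Set.range_nonempty f)
        rintro _ ⟨u, rfl⟩
        rw [add_comm, ← sub_le_iff_le_add, ha]
        apply le_csInf (Set.range_nonempty f)
        rintro _ ⟨v, rfl⟩
        have := hfd u v
        rw [abs_le] at this
        linarith [this.2]
      have hba0 : 0 ≤ b - a := by
        have := hmem w₀
        linarith [this.1, this.2]
      have hhoef := mcd_hoeffding (ν i0) hfm hmem (hsec_mean y) t
      have hmono : Real.exp (t ^ 2 * (b - a) ^ 2 / 8) ≤ Real.exp (t ^ 2 * c ^ 2 / 8) := by
        apply Real.exp_le_exp.mpr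
        have h1 : (b - a) ^ 2 ≤ c ^ 2 := by nlinarith
        nlinarith [sq_nonneg t]
      have heq : ∀ x₀, Real.exp (t * (H (x₀, y) - M))
          = Real.exp (t * (g y - M)) * Real.exp (t * f x₀) := by
        intro x₀
        rw [← Real.exp_add]
        congr 1
        rw [hf]
        ring
      calc ∫ x₀, Real.exp (t * (H (x₀, y) - M)) ∂(ν i0)
          = ∫ x₀, Real.exp (t * (g y - M)) * Real.exp (t * f x₀) ∂(ν i0) := by
            simp only [heq]
        _ = Real.exp (t * (g y - M)) * ∫ x₀, Real.exp (t * f x₀) ∂(ν i0) :=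
            integral_const_mul _ _
        _ ≤ Real.exp (t * (g y - M)) * Real.exp (t ^ 2 * c ^ 2 / 8) :=
            mul_le_mul_of_nonneg_left (hhoef.trans hmono) (Real.exp_nonneg _)
    -- integrability over the product
    have hEint : Integrable (fun z => Real.exp (t * (H z - M)))
        ((ν i0).prod (Measure.pi ν')) := by
      apply mcd_integrable_exp ((hHm.sub measurable_const).aestronglyMeasurable)
        (K := K + |M|)
      intro z
      calc |H z - M| ≤ |H z| + |M| := abs_sub _ _
        _ ≤ K + |M| := by linarith [hHbdd z]
    have hHint : Integrable H ((ν i0).prod (Measure.pi ν')) :=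
      mcd_integrable_of_bdd hHm.aestronglyMeasurable hHbdd
    -- M equals the mean of g
    have hM2 : ∫ y, g y ∂(Measure.pi ν') = M := by
      rw [hM, hcomp G, integral_prod_symm _ hHint]
    -- main chain
    have hmain : ∫ x, Real.exp (t * (G x - M)) ∂(Measure.pi ν)
        ≤ Real.exp (t ^ 2 * c ^ 2 / 8) * ∫ y, Real.exp (t * (g y - M)) ∂(Measure.pi ν') := by
      rw [hcomp (fun x => Real.exp (t * (G x - M)))]
      have h1 : ∫ z, Real.exp (t * (G (e.symm z) - M)) ∂((ν i0).prod (Measure.pi ν'))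
          = ∫ y, ∫ x₀, Real.exp (t * (H (x₀, y) - M)) ∂(ν i0) ∂(Measure.pi ν') :=
        integral_prod_symm _ hEint
      rw [h1]
      have h2 : ∫ y, ∫ x₀, Real.exp (t * (H (x₀, y) - M)) ∂(ν i0) ∂(Measure.pi ν')
          ≤ ∫ y, Real.exp (t * (g y - M)) * Real.exp (t ^ 2 * c ^ 2 / 8) ∂(Measure.pi ν') := by
        apply integral_mono hEint.integral_prod_right
        · exact (mcd_integrable_exp ((hgm.sub measurable_const).aestronglyMeasurable)
            (K := K + |M|) (fun y => by
              calc |g y - M| ≤ |g y| + |M| := abs_sub _ _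
                _ ≤ K + |M| := by linarith [hgbdd y]) t).mul_const _
        · exact hinner
      refine h2.trans (le_of_eq ?_)
      rw [integral_mul_const]
      ring
    have hIH := ih ν' g hgm c hc hbdd_g t
    rw [hM2] at hIH
    calc ∫ x, Real.exp (t * (G x - M)) ∂(Measure.pi ν)
        ≤ Real.exp (t ^ 2 * c ^ 2 / 8) * ∫ y, Real.exp (t * (g y - M)) ∂(Measure.pi ν') :=
          hmain
      _ ≤ Real.exp (t ^ 2 * c ^ 2 / 8) * Real.exp (t ^ 2 * c ^ 2 * m / 8) :=
          mul_le_mul_of_nonneg_left hIH (Real.exp_nonneg _)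
      _ = Real.exp (t ^ 2 * c ^ 2 * ((m + 1 : ℕ) : ℝ) / 8) := by
          rw [← Real.exp_add]
          congr 1
          push_cast
          ring

/-- (McDiarmid's bounded-differences inequality.)  Let `X₁, …, X_m`
be independent random variables and `F` a function such that changing any one
coordinate changes `F` by at most `c`.  Then for all `R > 0`,
`Pr[F(X) − E[F(X)] ≥ R] ≤ exp(−2R²/(c²m))` and
`Pr[F(X) − E[F(X)] ≤ −R] ≤ exp(−2R²/(c²m))`. -/
theorem mcdiarmid_inequality
    {Ω : Type*} [MeasurableSpace Ω] (μ : Measure Ω) [IsProbabilityMeasure μ]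
    (m : ℕ) (𝒳 : Fin m → Type*) [∀ i, MeasurableSpace (𝒳 i)]
    (X : ∀ i, Ω → 𝒳 i) (hmeas : ∀ i, Measurable (X i))
    (hind : iIndepFun X μ)
    (F : (∀ i, 𝒳 i) → ℝ) (hF : Measurable F)
    (c : ℝ) (hc : 0 < c)
    (hbdd : ∀ (x y : ∀ i, 𝒳 i) (i : Fin m),
      (∀ j, j ≠ i → x j = y j) → |F x - F y| ≤ c)
    (hint : Integrable (fun ω => F (fun i => X i ω)) μ)
    (R : ℝ) (hR : 0 < R) :
    μ {ω | F (fun i => X i ω) - ∫ ω', F (fun i => X i ω') ∂μ ≥ R} ≤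
      ENNReal.ofReal (Real.exp (-2 * R ^ 2 / (c ^ 2 * m))) ∧
    μ {ω | F (fun i => X i ω) - ∫ ω', F (fun i => X i ω') ∂μ ≤ -R} ≤
      ENNReal.ofReal (Real.exp (-2 * R ^ 2 / (c ^ 2 * m))) := by
  rcases Nat.eq_zero_or_pos m with rfl | hm
  · -- m = 0 : the bound is exp(-2R²/0) = exp 0 = 1
    have h1 : ENNReal.ofReal (Real.exp (-2 * R ^ 2 / (c ^ 2 * (0:ℕ)))) = 1 := by
      norm_num
    rw [h1]
    exact ⟨prob_le_one, prob_le_one⟩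
  -- general case
  set ν : ∀ i, Measure (𝒳 i) := fun i => μ.map (X i) with hν
  haveI : ∀ i, IsProbabilityMeasure (ν i) :=
    fun i => Measure.isProbabilityMeasure_map (hmeas i).aemeasurable
  set Φ : Ω → ∀ i, 𝒳 i := fun ω i => X i ω with hΦ
  have hΦm : Measurable Φ := measurable_pi_lambda _ hmeas
  have hmap : Measure.pi ν = μ.map Φ := by
    apply Measure.pi_eq
    intro s hs
    rw [Measure.map_apply hΦm (MeasurableSet.univ_pi hs)]
    have hpre : Φ ⁻¹' (Set.univ.pi s) = ⋂ i ∈ Finset.univ, X i ⁻¹' s i := by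
      ext ω
      simp [hΦ, Set.mem_univ_pi]
    rw [hpre, (iIndepFun_iff_measure_inter_preimage_eq_mul.mp hind) Finset.univ
      (fun i _ => hs i)]
    apply Finset.prod_congr rfl
    intro i _
    rw [hν]
    rw [Measure.map_apply (hmeas i) (hs i)]
  set pm := Measure.pi ν with hpm
  haveI : IsProbabilityMeasure pm := by
    rw [hpm]; infer_instance
  set M : ℝ := ∫ ω', F (fun i => X i ω') ∂μ with hM
  have hMpi : ∫ x, F x ∂pm = M := by
    rw [hmap, integral_map hΦm.aemeasurable
      (by rw [← hmap]; exact hF.aestronglyMeasurable)]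
  -- boundedness of F
  haveI hne : ∀ i, Nonempty (𝒳 i) := fun i => mcd_nonempty (ν i)
  set xbar : ∀ i, 𝒳 i := fun i => Classical.arbitrary _ with hxbar
  set K : ℝ := |F xbar| + c * m with hK
  have hFbdd : ∀ x, |F x| ≤ K := by
    intro x
    have h1 := mcd_osc F c hbdd hc.le Finset.univ x xbar (by simp)
    rw [Finset.card_univ, Fintype.card_fin] at h1
    calc |F x| = |F xbar + (F x - F xbar)| := by ring_nf
      _ ≤ |F xbar| + |F x - F xbar| := abs_add_le _ _
      _ ≤ K := by rw [hK]; linarith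
  have hFMbdd : ∀ x, |F x - M| ≤ K + |M| := by
    intro x
    calc |F x - M| ≤ |F x| + |M| := abs_sub _ _
      _ ≤ K + |M| := by linarith [hFbdd x]
  have hint_exp : ∀ t : ℝ, Integrable (fun x => Real.exp (t * (F x - M))) pm :=
    fun t => mcd_integrable_exp ((hF.sub measurable_const).aestronglyMeasurable) hFMbdd t
  -- mgf bound from the product-measure theorem
  have hmgf : ∀ t : ℝ, mgf (fun x => F x - M) pm t ≤ Real.exp (t ^ 2 * c ^ 2 * m / 8) := by
    intro t
    have := mcd_mgf_bound m ν F hF c hc.le hbdd t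
    rw [← hpm] at this
    rw [hMpi] at this
    exact this
  have hcm : (0:ℝ) < c ^ 2 * m := by
    have : (0:ℝ) < (m:ℝ) := by exact_mod_cast hm
    positivity
  -- transfer sets
  have hsetU : {ω | F (fun i => X i ω) - M ≥ R} = Φ ⁻¹' {x | R ≤ F x - M} := rfl
  have hsetL : {ω | F (fun i => X i ω) - M ≤ -R} = Φ ⁻¹' {x | F x - M ≤ -R} := rfl
  have hmsU : MeasurableSet {x : ∀ i, 𝒳 i | R ≤ F x - M} :=
    measurableSet_le measurable_const (hF.sub measurable_const)
  have hmsL : MeasurableSet {x : ∀ i, 𝒳 i | F x - M ≤ -R} :=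
    measurableSet_le (hF.sub measurable_const) measurable_const
  have hmeasU : μ {ω | F (fun i => X i ω) - M ≥ R} = pm {x | R ≤ F x - M} := by
    rw [hsetU, hmap, Measure.map_apply hΦm hmsU]
  have hmeasL : μ {ω | F (fun i => X i ω) - M ≤ -R} = pm {x | F x - M ≤ -R} := by
    rw [hsetL, hmap, Measure.map_apply hΦm hmsL]
  set t : ℝ := 4 * R / (c ^ 2 * m) with ht
  have htpos : 0 < t := by positivity
  have hexpt : -t * R + t ^ 2 * c ^ 2 * m / 8 = -2 * R ^ 2 / (c ^ 2 * m) := by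
    rw [ht]
    field_simp
    ring
  have hexpt' : -(-t) * (-R) + (-t) ^ 2 * c ^ 2 * m / 8 = -2 * R ^ 2 / (c ^ 2 * m) := by
    rw [ht]
    field_simp
    ring
  constructor
  · rw [hmeasU]
    rw [ENNReal.le_ofReal_iff_toReal_le (measure_ne_top pm _) (Real.exp_nonneg _)]
    calc (pm {x | R ≤ F x - M}).toReal
        ≤ Real.exp (-t * R) * mgf (fun x => F x - M) pm t :=
          measure_ge_le_exp_mul_mgf R htpos.le (hint_exp t)
      _ ≤ Real.exp (-t * R) * Real.exp (t ^ 2 * c ^ 2 * m / 8) :=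
          mul_le_mul_of_nonneg_left (hmgf t) (Real.exp_nonneg _)
      _ = Real.exp (-2 * R ^ 2 / (c ^ 2 * m)) := by
          rw [← Real.exp_add, hexpt]
  · rw [hmeasL]
    rw [ENNReal.le_ofReal_iff_toReal_le (measure_ne_top pm _) (Real.exp_nonneg _)]
    calc (pm {x | F x - M ≤ -R}).toReal
        ≤ Real.exp (-(-t) * (-R)) * mgf (fun x => F x - M) pm (-t) :=
          measure_le_le_exp_mul_mgf (-R) (by linarith) (hint_exp (-t))
      _ ≤ Real.exp (-(-t) * (-R)) * Real.exp ((-t) ^ 2 * c ^ 2 * m / 8) :=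
          mul_le_mul_of_nonneg_left (hmgf (-t)) (Real.exp_nonneg _)
      _ = Real.exp (-2 * R ^ 2 / (c ^ 2 * m)) := by
          rw [← Real.exp_add, hexpt']
end

section
/- During a batch protocol with n participants on channel α that lasts ℓ ≤ c₁·n steps, suppose at every one of these steps fewer than n/2 participants have succeeded, so at least n/2 players each broadcast on channel ᾱ with probability at least (c₂ log(c₁ n))/(c₁ n) at every step of ᾱ. Then for c₂ sufficiently large relative to c₁, for each step of ᾱ during the batch, with high probability in n at least two players broadcast on ᾱ at that step; hence with high probability in n no success occurs on ᾱ during these ℓ steps. -/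
open MeasureTheory ProbabilityTheory

/-- Elementary Chernoff-type estimate: `m (1-p)^(m-1) ≤ (2/p) exp(-pm/2)`. -/
lemma aux_chernoff_step (p : ℝ) (hp0 : 0 < p) (hp1 : p ≤ 1) (m : ℕ) (hm : 1 ≤ m) :
    (m : ℝ) * (1 - p) ^ (m - 1) ≤ 2 / p * Real.exp (-(p * m / 2)) := by
  have h1p : 0 ≤ 1 - p := by linarith
  -- (1-p)^(m-1) ≤ exp(-p)^(m-1)
  have h1 : (1 - p) ^ (m - 1) ≤ Real.exp (-p) ^ (m - 1) := by
    apply pow_le_pow_left₀ h1p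
    have := Real.add_one_le_exp (-p)
    linarith
  have h2 : Real.exp (-p) ^ (m - 1) = Real.exp (-(p * (m - 1 : ℕ))) := by
    rw [← Real.exp_nat_mul]
    ring_nf
  have hcast : ((m - 1 : ℕ) : ℝ) = (m : ℝ) - 1 := by
    rw [Nat.cast_sub hm]; simp
  -- m * exp(-(p*m/2)) ≤ 2/(p * e)
  have key : (m : ℝ) * Real.exp (-(p * m / 2)) ≤ 2 / (p * Real.exp 1) := by
    have ht := Real.add_one_le_exp (p * m / 2 - 1)
    have h3 : p * m / 2 ≤ Real.exp (p * m / 2) / Real.exp 1 := by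
      rw [← Real.exp_sub]; linarith
    have hepos : (0:ℝ) < Real.exp 1 := Real.exp_pos 1
    have hexppos : (0:ℝ) < Real.exp (p * m / 2) := Real.exp_pos _
    have hm' : (m : ℝ) ≤ 2 / (p * Real.exp 1) * Real.exp (p * m / 2) := by
      rw [div_mul_eq_mul_div, le_div_iff₀ (by positivity)]
      calc (m : ℝ) * (p * Real.exp 1) = (p * m / 2) * (2 * Real.exp 1) := by ring
        _ ≤ (Real.exp (p * m / 2) / Real.exp 1) * (2 * Real.exp 1) := by
            apply mul_le_mul_of_nonneg_right h3 (by positivity)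
        _ = 2 * Real.exp (p * m / 2) := by field_simp
    calc (m : ℝ) * Real.exp (-(p * m / 2))
        ≤ (2 / (p * Real.exp 1) * Real.exp (p * m / 2)) * Real.exp (-(p * m / 2)) :=
          mul_le_mul_of_nonneg_right hm' (Real.exp_pos _).le
      _ = 2 / (p * Real.exp 1) := by rw [mul_assoc, ← Real.exp_add]; simp
  -- combine
  have hmain : (m : ℝ) * (1 - p) ^ (m - 1)
      ≤ (m : ℝ) * Real.exp (-(p * ((m : ℝ) - 1))) := by
    apply mul_le_mul_of_nonneg_left _ (Nat.cast_nonneg m)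
    calc (1 - p) ^ (m - 1) ≤ Real.exp (-p) ^ (m - 1) := h1
      _ = Real.exp (-(p * (m - 1 : ℕ))) := h2
      _ = Real.exp (-(p * ((m : ℝ) - 1))) := by rw [hcast]
  refine hmain.trans ?_
  have hsplit : Real.exp (-(p * ((m : ℝ) - 1)))
      = Real.exp p * (Real.exp (-(p * m / 2)) * Real.exp (-(p * m / 2))) := by
    rw [← Real.exp_add, ← Real.exp_add]; ring_nf
  rw [hsplit]
  have hep : Real.exp p ≤ Real.exp 1 := Real.exp_le_exp.mpr hp1
  calc (m : ℝ) * (Real.exp p * (Real.exp (-(p * m / 2)) * Real.exp (-(p * m / 2))))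
      = Real.exp p * (((m : ℝ) * Real.exp (-(p * m / 2))) * Real.exp (-(p * m / 2))) := by ring
    _ ≤ Real.exp 1 * ((2 / (p * Real.exp 1)) * Real.exp (-(p * m / 2))) := by
        apply mul_le_mul hep _ (by positivity) (Real.exp_pos 1).le
        exact mul_le_mul_of_nonneg_right key (Real.exp_pos _).le
    _ = 2 / p * Real.exp (-(p * m / 2)) := by
        field_simp

/-- During a batch protocol with `n` participants lasting
`ℓ ≤ c₁·n` steps, suppose at every step of channel `ᾱ` at least `n/2` remaining
players independently broadcast on `ᾱ`, each with probability at least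
`(c₂ log(c₁ n))/(c₁ n)`.  Then for `c₂` sufficiently large relative to `c₁`, with
high probability in `n` (probability of failure at most `n^{−γ}`, for a `γ` of our
choice), at every one of these `ℓ` steps at least two players broadcast on `ᾱ`, and
hence no success occurs on `ᾱ` during these steps. -/
theorem jamming_blocks_other_channel :
    ∀ γ : ℝ, 0 < γ → ∀ c₁ : ℝ, 1 ≤ c₁ →
    ∃ c₂₀ : ℝ, ∀ c₂ : ℝ, c₂₀ ≤ c₂ →
    ∃ N₀ : ℕ, ∀ n : ℕ, N₀ ≤ n →
    ∀ ℓ : ℕ, (ℓ : ℝ) ≤ c₁ * n →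
    ∀ (Ω : Type) (_ : MeasurableSpace Ω) (μ : Measure Ω), IsProbabilityMeasure μ →
    ∀ count : ℕ → Ω → ℕ,  -- number of participants broadcasting on `ᾱ` at each step
    (∀ s < ℓ, ∃ m : ℕ, (n : ℝ) / 2 ≤ (m : ℝ) ∧
      ∃ W : Fin m → Ω → Bool,
        (∀ i, Measurable (W i)) ∧
        iIndepFun W μ ∧
        (∀ i, ENNReal.ofReal (c₂ * Real.log (c₁ * n) / (c₁ * n)) ≤
          μ {ω | W i ω = true}) ∧
        (∀ ω, count s ω = (Finset.univ.filter (fun i => W i ω = true)).card)) →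
    μ {ω | ∃ s < ℓ, count s ω ≤ 1} ≤ ENNReal.ofReal ((n : ℝ) ^ (-γ)) := by
  intro γ hγ c₁ hc₁
  refine ⟨4 * c₁ * (γ + 4), fun c₂ hc₂ => ⟨⌈c₁⌉₊ + 6, fun n hn ℓ hℓ Ω mΩ μ hμ count hcount => ?_⟩⟩
  -- basic numeric facts
  have hn6 : (6 : ℕ) ≤ n := le_trans (Nat.le_add_left _ _) hn
  have hn6R : (6 : ℝ) ≤ (n : ℝ) := by exact_mod_cast hn6
  have hnpos : (0 : ℝ) < n := by linarith
  have hc₁pos : (0 : ℝ) < c₁ := by linarith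
  have hc₁n : (n : ℝ) ≤ c₁ * n := le_mul_of_one_le_left hnpos.le hc₁
  have hc₁npos : (0 : ℝ) < c₁ * n := by positivity
  have hc₁len : c₁ ≤ (n : ℝ) := by
    have h1 : c₁ ≤ (⌈c₁⌉₊ : ℝ) := Nat.le_ceil c₁
    have h2 : (⌈c₁⌉₊ : ℕ) ≤ n := le_trans (Nat.le_add_right _ _) hn
    exact h1.trans (by exact_mod_cast h2)
  set L : ℝ := Real.log (c₁ * n) with hLdef
  have hL1 : 1 ≤ L := by
    rw [hLdef, Real.le_log_iff_exp_le hc₁npos]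
    have : Real.exp 1 ≤ 6 := le_of_lt (lt_of_lt_of_le Real.exp_one_lt_d9 (by norm_num))
    linarith
  have hγ4 : (0 : ℝ) < γ + 4 := by linarith
  have hc₂big : 4 * c₁ * (γ + 4) ≤ c₂ := hc₂
  have hc₂pos : (0 : ℝ) < c₂ := lt_of_lt_of_le (by positivity) hc₂big
  set p : ℝ := c₂ * L / (c₁ * n) with hpdef
  have hp0 : 0 < p := by rw [hpdef]; positivity
  -- trivial case ℓ = 0
  rcases Nat.eq_zero_or_pos ℓ with hℓ0 | hℓpos
  · have he : {ω : Ω | ∃ s < ℓ, count s ω ≤ 1} = ∅ := by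
      subst hℓ0; ext ω; simp
    rw [he, measure_empty]; exact zero_le
  -- p ≤ 1
  have hp1 : p ≤ 1 := by
    obtain ⟨m₀, hm₀, W₀, -, -, hW₀p, -⟩ := hcount 0 hℓpos
    have hm₀1 : 0 < m₀ := by
      have : (0 : ℝ) < (m₀ : ℝ) := lt_of_lt_of_le (by linarith) hm₀
      exact_mod_cast this
    have h := (hW₀p ⟨0, hm₀1⟩).trans prob_le_one
    exact ENNReal.ofReal_le_one.mp h
  set B : ℝ := 2 / p * Real.exp (-(p * n / 4)) with hBdef
  have hBpos : 0 ≤ B := by rw [hBdef]; positivity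
  -- per-step bound
  have hstep : ∀ s < ℓ, μ {ω | count s ω ≤ 1} ≤ ENNReal.ofReal B := by
    intro s hs
    obtain ⟨m, hm, W, hWmeas, hWindep, hWp, hWcount⟩ := hcount s hs
    have hm1 : 0 < m := by
      have : (0 : ℝ) < (m : ℝ) := lt_of_lt_of_le (by linarith) hm
      exact_mod_cast this
    have hincl : {ω | count s ω ≤ 1} ⊆
        ⋃ i : Fin m, ⋂ j ∈ Finset.univ.erase i, W j ⁻¹' {false} := by
      intro ω hω
      simp only [Set.mem_setOf_eq, hWcount ω] at hω
      by_cases hex : ∃ i, W i ω = true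
      · obtain ⟨i, hi⟩ := hex
        refine Set.mem_iUnion.mpr ⟨i, Set.mem_iInter₂.mpr fun j hj => ?_⟩
        have hji : j ≠ i := Finset.ne_of_mem_erase hj
        simp only [Set.mem_preimage, Set.mem_singleton_iff]
        by_contra hjf
        have hjt : W j ω = true := by
          cases h : W j ω
          · exact absurd h hjf
          · rfl
        have h2 : 1 < (Finset.univ.filter (fun k => W k ω = true)).card := by
          refine Finset.one_lt_card.mpr ⟨j, ?_, i, ?_, hji⟩
          · simp [hjt]
          · simp [hi]
        omega
      · push_neg at hex
        refine Set.mem_iUnion.mpr ⟨⟨0, hm1⟩, Set.mem_iInter₂.mpr fun j hj => ?_⟩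
        simp only [Set.mem_preimage, Set.mem_singleton_iff]
        cases h : W j ω
        · rfl
        · exact absurd h (hex j)
    have hfactor : ∀ j : Fin m, μ (W j ⁻¹' {false}) ≤ ENNReal.ofReal (1 - p) := by
      intro j
      have hcompl : W j ⁻¹' {false} = (W j ⁻¹' {true})ᶜ := by
        ext ω; cases h : W j ω <;> simp [h]
      rw [hcompl, prob_compl_eq_one_sub ((hWmeas j) (measurableSet_singleton true))]
      have hj := hWp j
      have hset : {ω | W j ω = true} = W j ⁻¹' {true} := rfl
      rw [hset] at hj
      have : ENNReal.ofReal (1 - p) = 1 - ENNReal.ofReal p := by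
        rw [ENNReal.ofReal_sub 1 hp0.le, ENNReal.ofReal_one]
      rw [this]
      exact tsub_le_tsub_left hj 1
    have hinter : ∀ i : Fin m,
        μ (⋂ j ∈ Finset.univ.erase i, W j ⁻¹' {false}) ≤
          ENNReal.ofReal ((1 - p) ^ (m - 1)) := by
      intro i
      rw [hWindep.meas_biInter (fun j _ => ⟨{false}, trivial, rfl⟩)]
      have hcard : (Finset.univ.erase i).card = m - 1 := by
        rw [Finset.card_erase_of_mem (Finset.mem_univ i), Finset.card_univ, Fintype.card_fin]
      calc ∏ j ∈ Finset.univ.erase i, μ (W j ⁻¹' {false})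
          ≤ ∏ _j ∈ Finset.univ.erase i, ENNReal.ofReal (1 - p) :=
            Finset.prod_le_prod' (fun j _ => hfactor j)
        _ = ENNReal.ofReal (1 - p) ^ (m - 1) := by rw [Finset.prod_const, hcard]
        _ = ENNReal.ofReal ((1 - p) ^ (m - 1)) := by
            rw [ENNReal.ofReal_pow (by linarith : (0:ℝ) ≤ 1 - p)]
    calc μ {ω | count s ω ≤ 1}
        ≤ μ (⋃ i : Fin m, ⋂ j ∈ Finset.univ.erase i, W j ⁻¹' {false}) := measure_mono hincl
      _ ≤ ∑ i : Fin m, μ (⋂ j ∈ Finset.univ.erase i, W j ⁻¹' {false}) :=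
          measure_iUnion_fintype_le _ _
      _ ≤ ∑ _i : Fin m, ENNReal.ofReal ((1 - p) ^ (m - 1)) :=
          Finset.sum_le_sum (fun i _ => hinter i)
      _ = (m : ENNReal) * ENNReal.ofReal ((1 - p) ^ (m - 1)) := by
          rw [Finset.sum_const, Finset.card_univ, Fintype.card_fin, nsmul_eq_mul]
      _ = ENNReal.ofReal ((m : ℝ) * (1 - p) ^ (m - 1)) := by
          rw [ENNReal.ofReal_mul (Nat.cast_nonneg m), ENNReal.ofReal_natCast]
      _ ≤ ENNReal.ofReal B := by
          apply ENNReal.ofReal_le_ofReal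
          calc (m : ℝ) * (1 - p) ^ (m - 1)
              ≤ 2 / p * Real.exp (-(p * m / 2)) := aux_chernoff_step p hp0 hp1 m hm1
            _ ≤ B := by
                rw [hBdef]
                apply mul_le_mul_of_nonneg_left _ (by positivity)
                apply Real.exp_le_exp.mpr
                nlinarith [hp0.le, hm]
  -- union bound over the ℓ steps
  have hunion : {ω : Ω | ∃ s < ℓ, count s ω ≤ 1} =
      ⋃ s ∈ Finset.range ℓ, {ω | count s ω ≤ 1} := by
    ext ω; simp
  rw [hunion]
  have hfinal : c₁ * n * B ≤ (n : ℝ) ^ (-γ) := by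
    -- 2/p ≤ 2n
    have hc₂c₁ : c₁ ≤ c₂ * L := by nlinarith
    have hpn : 1 / (n : ℝ) ≤ p := by
      rw [hpdef]
      rw [div_le_div_iff₀ hnpos hc₁npos]
      nlinarith
    have h2p : 2 / p ≤ 2 * n := by
      rw [div_le_iff₀ hp0]
      have : 2 * (n : ℝ) * (1 / n) ≤ 2 * n * p :=
        mul_le_mul_of_nonneg_left hpn (by positivity)
      calc (2 : ℝ) = 2 * n * (1 / n) := by field_simp
        _ ≤ 2 * n * p := this
    -- exponential bound
    have hexp : Real.exp (-(p * n / 4)) ≤ (n : ℝ) ^ (-(γ + 4)) := by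
      have harg : (γ + 4) * L ≤ p * n / 4 := by
        have : p * n = c₂ * L / c₁ := by
          rw [hpdef]; field_simp
        rw [this, div_div, le_div_iff₀ (by positivity)]
        nlinarith [mul_nonneg (sub_nonneg.mpr hc₂big) (by linarith : (0:ℝ) ≤ L)]
      calc Real.exp (-(p * n / 4)) ≤ Real.exp (-((γ + 4) * L)) := by
            apply Real.exp_le_exp.mpr; linarith
        _ = (c₁ * n) ^ (-(γ + 4)) := by
            rw [Real.rpow_def_of_pos hc₁npos]; ring_nf; rw [hLdef]
        _ ≤ (n : ℝ) ^ (-(γ + 4)) :=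
            Real.rpow_le_rpow_of_nonpos hnpos hc₁n (by linarith)
    have hrpow_pos : (0 : ℝ) < (n : ℝ) ^ (-(γ + 4)) := Real.rpow_pos_of_pos hnpos _
    have hB2 : B ≤ 2 * n * (n : ℝ) ^ (-(γ + 4)) := by
      rw [hBdef]
      apply mul_le_mul h2p hexp (Real.exp_pos _).le (by positivity)
    have hsplit : (n : ℝ) ^ (-(γ + 4)) = (n : ℝ) ^ (-γ) * ((n:ℝ)⁻¹) ^ (4:ℕ) := by
      have h4 : ((n:ℝ)⁻¹) ^ (4:ℕ) = (n:ℝ) ^ (-(4:ℝ)) := by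
        rw [inv_pow, ← Real.rpow_natCast (n:ℝ) 4, ← Real.rpow_neg hnpos.le]
        norm_num
      rw [h4, ← Real.rpow_add hnpos]
      congr 1; ring
    have hmono : c₁ * n * B ≤ (n * n) * (2 * n * (n : ℝ) ^ (-(γ + 4))) := by
      apply mul_le_mul _ hB2 hBpos (by positivity)
      exact mul_le_mul_of_nonneg_right hc₁len hnpos.le
    refine hmono.trans ?_
    rw [hsplit]
    have hrγ : (0:ℝ) ≤ (n : ℝ) ^ (-γ) := (Real.rpow_pos_of_pos hnpos _).le
    have hinv : (n:ℝ) * ((n:ℝ)⁻¹) = 1 := mul_inv_cancel₀ hnpos.ne'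
    calc (n:ℝ) * n * (2 * n * ((n : ℝ) ^ (-γ) * ((n:ℝ)⁻¹) ^ (4:ℕ)))
        = (n : ℝ) ^ (-γ) * (2 * ((n * (n:ℝ)⁻¹) * (n * (n:ℝ)⁻¹) * (n * (n:ℝ)⁻¹) * (n:ℝ)⁻¹)) := by
          ring
      _ = (n : ℝ) ^ (-γ) * (2 * (n:ℝ)⁻¹) := by rw [hinv]; ring
      _ ≤ (n : ℝ) ^ (-γ) * 1 := by
          apply mul_le_mul_of_nonneg_left _ hrγ
          rw [← hinv]
          have : (2:ℝ) ≤ n := by linarith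
          exact mul_le_mul_of_nonneg_right this (by positivity)
      _ = (n : ℝ) ^ (-γ) := mul_one _
  calc μ (⋃ s ∈ Finset.range ℓ, {ω | count s ω ≤ 1})
      ≤ ∑ s ∈ Finset.range ℓ, μ {ω | count s ω ≤ 1} := measure_biUnion_finset_le _ _
    _ ≤ ∑ _s ∈ Finset.range ℓ, ENNReal.ofReal B :=
        Finset.sum_le_sum (fun s hs => hstep s (Finset.mem_range.mp hs))
    _ = (ℓ : ENNReal) * ENNReal.ofReal B := by
        rw [Finset.sum_const, Finset.card_range, nsmul_eq_mul]
    _ ≤ ENNReal.ofReal (c₁ * n) * ENNReal.ofReal B := by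
        apply mul_le_mul_left
        rw [← ENNReal.ofReal_natCast ℓ]
        exact ENNReal.ofReal_le_ofReal hℓ
    _ = ENNReal.ofReal (c₁ * n * B) := (ENNReal.ofReal_mul hc₁npos.le).symm
    _ ≤ ENNReal.ofReal ((n : ℝ) ^ (-γ)) := ENNReal.ofReal_le_ofReal hfinal
end

section
/- Let batch operations B₁, B₂, … each begin with a distinct success, with kᵢ participants and length |Bᵢ|, and suppose all batches lie within r active steps with Σᵢ |Bᵢ| ≤ r. Call Bᵢ good if |Bᵢ| ≥ kᵢ/2 and bad otherwise. Then Σ_{good Bᵢ} kᵢ ≤ 2r. Moreover, if for every i and every k, conditioned on the outcomes of B₁, …, B_{i−1}, the probability that Bᵢ is bad with kᵢ = k is at most 1/poly(k), then with high probability in n (where the number of batches is at most n), Σ_{bad Bᵢ} kᵢ ≤ O(n + r). -/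
set_option maxHeartbeats 1000000

open MeasureTheory ProbabilityTheory

lemma aux_sum_inv_sq : ∀ n : ℕ, ∑ k ∈ Finset.Icc 1 (n+1), (1:ℝ)/(k:ℝ)^2 ≤ 2 - 1/(n+1) := by
  intro n
  induction n with
  | zero => norm_num
  | succ m ih =>
    rw [Finset.sum_Icc_succ_top (by omega : 1 ≤ m+1+1)]
    have h1 : (0:ℝ) < (m:ℝ)+1 := by positivity
    have h2 : (0:ℝ) < (m:ℝ)+1+1 := by positivity
    have key : (1:ℝ)/((m+1:ℕ)+1:ℝ)^2 ≤ 1/((m:ℝ)+1) - 1/((m:ℝ)+1+1) := by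
      push_cast
      rw [div_sub_div _ _ (ne_of_gt h1) (ne_of_gt h2)]
      rw [div_le_div_iff₀ (by positivity) (by positivity)]
      ring_nf
      nlinarith
    push_cast at *
    linarith

lemma sum_inv_sq (n : ℕ) : ∑ k ∈ Finset.Icc 1 n, (1:ℝ)/(k:ℝ)^2 ≤ 2 := by
  cases n with
  | zero => simp
  | succ m =>
    have h1 := aux_sum_inv_sq m
    have h2 : (0:ℝ) < (m:ℝ)+1 := by positivity
    have := le_of_lt (div_pos one_pos h2)
    linarith

lemma exp_sub_one_le_mul (x : ℝ) : Real.exp x - 1 ≤ x * Real.exp x := by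
  have h := Real.add_one_le_exp (-x)
  have hp := Real.exp_pos x
  have h2 : (-x + 1) * Real.exp x ≤ Real.exp (-x) * Real.exp x :=
    mul_le_mul_of_nonneg_right h hp.le
  rw [← Real.exp_add] at h2
  simp at h2
  nlinarith


noncomputable def badX {Ω : Type} {b : ℕ} (K Len : Fin b → Ω → ℕ) (i : Fin b) (ω : Ω) : ℝ :=
  if 2 * Len i ω < K i ω then (K i ω : ℝ) else 0

noncomputable def expX {Ω : Type} {b : ℕ} (K Len : Fin b → Ω → ℕ) (lam : ℝ) (i : Fin b)
    (ω : Ω) : ℝ :=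
  Real.exp (lam * badX K Len i ω)

lemma badX_nonneg {Ω : Type} {b : ℕ} (K Len : Fin b → Ω → ℕ) (i : Fin b) (ω : Ω) :
    0 ≤ badX K Len i ω := by
  unfold badX; split_ifs <;> positivity

lemma badX_measurable {Ω : Type} {m : MeasurableSpace Ω} {b : ℕ} {K Len : Fin b → Ω → ℕ}
    {i : Fin b} (hK : Measurable[m] (K i)) (hLen : Measurable[m] (Len i)) :
    Measurable[m] (badX K Len i) := by
  unfold badX
  exact Measurable.ite (measurableSet_lt (hLen.const_mul 2) hK)
    (measurable_from_top.comp hK) measurable_const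

lemma expX_measurable {Ω : Type} {m : MeasurableSpace Ω} {b : ℕ} {K Len : Fin b → Ω → ℕ}
    {i : Fin b} {lam : ℝ} (hK : Measurable[m] (K i)) (hLen : Measurable[m] (Len i)) :
    Measurable[m] (expX K Len lam i) :=
  Real.measurable_exp.comp ((badX_measurable hK hLen).const_mul lam)

lemma one_le_expX {Ω : Type} {b : ℕ} {K Len : Fin b → Ω → ℕ} {lam : ℝ} (hlam : 0 ≤ lam)
    (i : Fin b) (ω : Ω) : 1 ≤ expX K Len lam i ω :=
  Real.one_le_exp (mul_nonneg hlam (badX_nonneg K Len i ω))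

lemma condexp_expX_le {Ω : Type} {mΩ : MeasurableSpace Ω} {μ : Measure Ω}
    [IsProbabilityMeasure μ] {b n : ℕ} {K Len : Fin b → Ω → ℕ} {𝓕 : Filtration ℕ mΩ}
    {C p lam : ℝ} (hC : 0 < C) (hlam : 0 ≤ lam) (i : Fin b)
    (hKm : Measurable (K i)) (hLenm : Measurable (Len i))
    (hKn : ∀ ω, K i ω ≤ n)
    (hcond : ∀ k : ℕ, 1 ≤ k →
      μ[Set.indicator {ω | K i ω = k ∧ 2 * Len i ω < K i ω} (fun _ => (1 : ℝ)) | 𝓕 i]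
        ≤ᵐ[μ] fun _ => C / (k : ℝ) ^ p) :
    μ[expX K Len lam i | 𝓕 (i:ℕ)] ≤ᵐ[μ]
      fun _ => 1 + ∑ k ∈ Finset.Icc 1 n, (Real.exp (lam * k) - 1) * (C / (k:ℝ) ^ p) := by
  classical
  set A : ℕ → Set Ω := fun k => {ω | K i ω = k ∧ 2 * Len i ω < K i ω} with hAdef
  have hA : ∀ k, MeasurableSet (A k) := by
    intro k
    have h1 : MeasurableSet {ω | K i ω = k} := hKm (measurableSet_singleton k)
    have h2 : MeasurableSet {ω | 2 * Len i ω < K i ω} :=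
      measurableSet_lt (hLenm.const_mul 2) hKm
    exact h1.inter h2
  set g : ℕ → Ω → ℝ :=
    fun k => (Real.exp (lam * k) - 1) • Set.indicator (A k) (fun _ => (1:ℝ)) with hgdef
  have hind_int : ∀ k, Integrable (Set.indicator (A k) (fun _ => (1:ℝ))) μ :=
    fun k => (integrable_const (1:ℝ)).indicator (hA k)
  have hgint : ∀ k, Integrable (g k) μ := fun k => (hind_int k).smul _
  have hc0 : ∀ k : ℕ, 0 ≤ Real.exp (lam * k) - 1 := by
    intro k
    have : (1:ℝ) ≤ Real.exp (lam * k) := Real.one_le_exp (by positivity)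
    linarith
  set G : Ω → ℝ := (fun _ => (1:ℝ)) + ∑ k ∈ Finset.Icc 1 n, g k with hGdef
  have hGapp : ∀ ω, G ω = 1 + ∑ k ∈ Finset.Icc 1 n, g k ω := by
    intro ω
    rw [hGdef]
    simp [Finset.sum_apply]
  have hGint : Integrable G μ :=
    (integrable_const (1:ℝ)).add (integrable_finset_sum' _ (fun k _ => hgint k))
  have hfint : Integrable (expX K Len lam i) μ := by
    refine Integrable.mono' (integrable_const (Real.exp (lam * n)))
      ((expX_measurable hKm hLenm).aestronglyMeasurable) (ae_of_all _ fun ω => ?_)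
    rw [Real.norm_eq_abs, abs_of_nonneg (le_trans zero_le_one (one_le_expX hlam i ω))]
    apply Real.exp_le_exp.mpr
    apply mul_le_mul_of_nonneg_left _ hlam
    unfold badX
    split_ifs with h
    · exact_mod_cast hKn ω
    · positivity
  have hfG : ∀ ω, expX K Len lam i ω ≤ G ω := by
    intro ω
    rw [hGapp]
    by_cases hbad : 2 * Len i ω < K i ω
    · have hk1 : 1 ≤ K i ω := by omega
      have hkmem : K i ω ∈ Finset.Icc 1 n := Finset.mem_Icc.mpr ⟨hk1, hKn ω⟩
      have hXval : badX K Len i ω = (K i ω : ℝ) := by unfold badX; rw [if_pos hbad]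
      have hsum : ∑ k ∈ Finset.Icc 1 n, g k ω = Real.exp (lam * K i ω) - 1 := by
        rw [Finset.sum_eq_single (K i ω)]
        · rw [hgdef]
          simp only [Pi.smul_apply, smul_eq_mul]
          rw [Set.indicator_of_mem (by exact ⟨rfl, hbad⟩ : ω ∈ A (K i ω))]
          ring
        · intro k _ hne
          rw [hgdef]
          simp only [Pi.smul_apply, smul_eq_mul]
          rw [Set.indicator_of_notMem]
          · ring
          · intro hmem
            exact absurd hmem.1.symm hne
        · intro habs
          exact absurd hkmem habs
      rw [hsum]
      unfold expX
      rw [hXval]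
      linarith
    · have hXval : badX K Len i ω = 0 := by unfold badX; rw [if_neg hbad]
      have hsum : ∑ k ∈ Finset.Icc 1 n, g k ω = 0 := by
        apply Finset.sum_eq_zero
        intro k _
        rw [hgdef]
        simp only [Pi.smul_apply, smul_eq_mul]
        rw [Set.indicator_of_notMem]
        · ring
        · intro hmem
          exact hbad hmem.2
      rw [hsum]
      unfold expX
      rw [hXval, mul_zero, Real.exp_zero]
      norm_num
  have hmono : μ[expX K Len lam i | 𝓕 (i:ℕ)] ≤ᵐ[μ] μ[G | 𝓕 (i:ℕ)] :=
    condExp_mono hfint hGint (ae_of_all _ hfG)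
  have hadd : μ[G | 𝓕 (i:ℕ)] =ᵐ[μ]
      μ[(fun _ => (1:ℝ)) | 𝓕 (i:ℕ)] + μ[(∑ k ∈ Finset.Icc 1 n, g k) | 𝓕 (i:ℕ)] := by
    rw [hGdef]
    exact condExp_add (integrable_const (1:ℝ)) (integrable_finset_sum' _ (fun k _ => hgint k)) _
  have hconstEq : μ[(fun _ => (1:ℝ)) | 𝓕 (i:ℕ)] = fun _ => (1:ℝ) :=
    condExp_const (𝓕.le (i:ℕ)) 1
  have hsumEq : μ[(∑ k ∈ Finset.Icc 1 n, g k) | 𝓕 (i:ℕ)]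
      =ᵐ[μ] ∑ k ∈ Finset.Icc 1 n, μ[g k | 𝓕 (i:ℕ)] :=
    condExp_finset_sum (fun k _ => hgint k) _
  have hker : ∀ᵐ ω ∂μ, ∀ k, k ∈ Finset.Icc 1 n →
      (μ[g k | 𝓕 (i:ℕ)]) ω ≤ (Real.exp (lam * k) - 1) * (C / (k:ℝ) ^ p) := by
    rw [ae_all_iff]
    intro k
    by_cases hk : 1 ≤ k
    · filter_upwards [condExp_smul (μ := μ) (m := 𝓕 (i:ℕ)) (Real.exp (lam * k) - 1)
        (Set.indicator (A k) (fun _ => (1:ℝ))), hcond k hk] with ω h1 h2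
      intro _
      have hg : (μ[g k | 𝓕 (i:ℕ)]) ω
          = ((Real.exp (lam * k) - 1) • μ[Set.indicator (A k) (fun _ => (1:ℝ)) | 𝓕 (i:ℕ)]) ω := h1
      rw [hg]
      simp only [Pi.smul_apply, smul_eq_mul]
      exact mul_le_mul_of_nonneg_left h2 (hc0 k)
    · exact ae_of_all _ (fun ω hmem => absurd (Finset.mem_Icc.mp hmem).1 hk)
  filter_upwards [hmono, hadd, hsumEq, hker] with ω h1 h2 h3 h4
  have hGval : (μ[G | 𝓕 (i:ℕ)]) ω = 1 + ∑ k ∈ Finset.Icc 1 n, (μ[g k | 𝓕 (i:ℕ)]) ω := by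
    rw [h2]
    simp only [Pi.add_apply, hconstEq, h3, Finset.sum_apply]
  calc (μ[expX K Len lam i | 𝓕 (i:ℕ)]) ω ≤ (μ[G | 𝓕 (i:ℕ)]) ω := h1
  _ = 1 + ∑ k ∈ Finset.Icc 1 n, (μ[g k | 𝓕 (i:ℕ)]) ω := hGval
  _ ≤ 1 + ∑ k ∈ Finset.Icc 1 n, (Real.exp (lam * k) - 1) * (C / (k:ℝ) ^ p) := by
      have := Finset.sum_le_sum (fun k hk => h4 k hk)
      linarith


noncomputable def prodF {Ω : Type} {b : ℕ} (f : Fin b → Ω → ℝ) (j : ℕ) (ω : Ω) : ℝ :=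
  ∏ i ∈ Finset.univ.filter (fun i : Fin b => (i:ℕ) < j), f i ω

lemma prodF_succ_of_lt {Ω : Type} {b : ℕ} (f : Fin b → Ω → ℝ) {j : ℕ} (hj : j < b) (ω : Ω) :
    prodF f (j+1) ω = prodF f j ω * f ⟨j, hj⟩ ω := by
  unfold prodF
  have hset : Finset.univ.filter (fun i : Fin b => (i:ℕ) < j+1) =
      insert ⟨j,hj⟩ (Finset.univ.filter (fun i : Fin b => (i:ℕ) < j)) := by
    ext i
    simp only [Finset.mem_filter, Finset.mem_insert, Finset.mem_univ, true_and]
    constructor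
    · intro h
      rcases Nat.lt_succ_iff_lt_or_eq.mp h with h'|h'
      · exact Or.inr h'
      · exact Or.inl (Fin.ext h')
    · rintro (h|h)
      · rw [h]; simp
      · omega
  rw [hset, Finset.prod_insert (by simp)]
  ring

lemma prodF_succ_of_ge {Ω : Type} {b : ℕ} (f : Fin b → Ω → ℝ) {j : ℕ} (hj : b ≤ j) (ω : Ω) :
    prodF f (j+1) ω = prodF f j ω := by
  unfold prodF
  congr 1
  apply Finset.filter_congr
  intro i _
  have hib : (i:ℕ) < b := i.isLt
  constructor <;> omega

lemma integral_prodF_le {Ω : Type} {mΩ : MeasurableSpace Ω} {μ : Measure Ω}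
    [IsProbabilityMeasure μ] {b : ℕ} {𝓕 : Filtration ℕ mΩ} {f : Fin b → Ω → ℝ}
    {D B : ℝ} (hD1 : 1 ≤ D) (hB1 : 1 ≤ B)
    (hfm : ∀ i : Fin b, Measurable[𝓕 ((i:ℕ)+1)] (f i))
    (hf1 : ∀ i ω, 1 ≤ f i ω) (hfB : ∀ i ω, f i ω ≤ B)
    (hcondf : ∀ i : Fin b, μ[f i | 𝓕 (i:ℕ)] ≤ᵐ[μ] fun _ => D) :
    ∀ j : ℕ, ∫ ω, prodF f j ω ∂μ ≤ D ^ j := by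
  have hD0 : 0 ≤ D := le_trans zero_le_one hD1
  have hfmeas : ∀ i, Measurable (f i) := fun i => (hfm i).mono (𝓕.le _) le_rfl
  have hfint : ∀ i, Integrable (f i) μ := by
    intro i
    refine Integrable.mono' (integrable_const B) (hfmeas i).aestronglyMeasurable
      (ae_of_all _ fun ω => ?_)
    rw [Real.norm_eq_abs, abs_of_nonneg (le_trans zero_le_one (hf1 i ω))]
    exact hfB i ω
  have hP1 : ∀ j ω, 1 ≤ prodF f j ω := by
    intro j ω; unfold prodF
    calc (1:ℝ) = ∏ _i ∈ Finset.univ.filter (fun i : Fin b => (i:ℕ) < j), (1:ℝ) :=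
          (Finset.prod_const_one).symm
    _ ≤ _ := Finset.prod_le_prod (fun _ _ => zero_le_one) (fun i _ => hf1 i ω)
  have hP0 : ∀ j ω, 0 ≤ prodF f j ω := fun j ω => le_trans zero_le_one (hP1 j ω)
  have hPB : ∀ j ω, prodF f j ω ≤ B ^ b := by
    intro j ω
    unfold prodF
    calc ∏ i ∈ Finset.univ.filter (fun i : Fin b => (i:ℕ) < j), f i ω ≤ ∏ _i ∈ Finset.univ.filter (fun i : Fin b => (i:ℕ) < j), B :=
      Finset.prod_le_prod (fun i _ => le_trans zero_le_one (hf1 i ω)) (fun i _ => hfB i ω)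
    _ = B ^ (Finset.univ.filter (fun i : Fin b => (i:ℕ) < j)).card := Finset.prod_const _
    _ ≤ B ^ b := pow_le_pow_right₀ hB1 (le_trans (Finset.card_filter_le _ _) (by simp))
  have hPmeas : ∀ j, Measurable[𝓕 j] (prodF f j) := by
    intro j
    unfold prodF
    apply Finset.measurable_prod
    intro i hi
    have hij : (i:ℕ) + 1 ≤ j := Finset.mem_filter.mp hi |>.2
    exact (hfm i).mono (𝓕.mono hij) le_rfl
  have hPmeas' : ∀ j, Measurable (prodF f j) := fun j => (hPmeas j).mono (𝓕.le _) le_rfl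
  have hPint : ∀ j, Integrable (prodF f j) μ := by
    intro j
    refine Integrable.mono' (integrable_const (B ^ b)) (hPmeas' j).aestronglyMeasurable
      (ae_of_all _ fun ω => ?_)
    rw [Real.norm_eq_abs, abs_of_nonneg (hP0 j ω)]
    exact hPB j ω
  intro j
  induction j with
  | zero =>
    have : ∀ ω, prodF f 0 ω = 1 := by
      intro ω; unfold prodF
      rw [Finset.filter_false_of_mem (by intro i _; omega), Finset.prod_empty]
    rw [integral_congr_ae (ae_of_all _ this)]
    simp
  | succ j ih =>
    by_cases hj : j < b
    · set i₀ : Fin b := ⟨j, hj⟩ with hi₀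
      have hfi₀ : Integrable (fun ω => prodF f j ω * f i₀ ω) μ := by
        refine Integrable.mono' (integrable_const (B ^ b * B))
          ((hPmeas' j).mul (hfmeas i₀)).aestronglyMeasurable (ae_of_all _ fun ω => ?_)
        rw [Real.norm_eq_abs, abs_of_nonneg
          (mul_nonneg (hP0 j ω) (le_trans zero_le_one (hf1 i₀ ω)))]
        exact mul_le_mul (hPB j ω) (hfB i₀ ω) (le_trans zero_le_one (hf1 i₀ ω))
          (by positivity)
      have hpull : μ[(fun ω => prodF f j ω * f i₀ ω) | 𝓕 j]
          =ᵐ[μ] fun ω => prodF f j ω * (μ[f i₀ | 𝓕 j]) ω := by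
        have := condExp_mul_of_stronglyMeasurable_left (m := 𝓕 j) (μ := μ)
          (hPmeas j).stronglyMeasurable hfi₀ (hfint i₀)
        exact this
      have hcond' : μ[f i₀ | 𝓕 j] ≤ᵐ[μ] fun _ => D := hcondf i₀
      calc ∫ ω, prodF f (j+1) ω ∂μ
          = ∫ ω, prodF f j ω * f i₀ ω ∂μ :=
            integral_congr_ae (ae_of_all _ (fun ω => prodF_succ_of_lt f hj ω))
      _ = ∫ ω, (μ[(fun ω => prodF f j ω * f i₀ ω) | 𝓕 j]) ω ∂μ :=
            (integral_condExp (𝓕.le j)).symm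
      _ = ∫ ω, prodF f j ω * (μ[f i₀ | 𝓕 j]) ω ∂μ := integral_congr_ae hpull
      _ ≤ ∫ ω, prodF f j ω * D ∂μ := by
            refine integral_mono_ae (integrable_condExp.congr hpull) ((hPint j).mul_const D) ?_
            filter_upwards [hcond'] with ω hω
            exact mul_le_mul_of_nonneg_left hω (hP0 j ω)
      _ = (∫ ω, prodF f j ω ∂μ) * D := integral_mul_const D _
      _ ≤ D ^ j * D := mul_le_mul_of_nonneg_right ih hD0
      _ = D ^ (j+1) := (pow_succ D j).symm
    · have heq : ∀ ω, prodF f (j+1) ω = prodF f j ω :=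
        fun ω => prodF_succ_of_ge f (le_of_not_gt hj) ω
      calc ∫ ω, prodF f (j+1) ω ∂μ = ∫ ω, prodF f j ω ∂μ :=
            integral_congr_ae (ae_of_all _ heq)
      _ ≤ D ^ j := ih
      _ ≤ D ^ (j+1) := pow_le_pow_right₀ hD1 (Nat.le_succ j)

/-- Batch operations `B₁, B₂, …` (each begun by a distinct success,
so at most `n` of them) have `K i` participants and length `Len i`, all within `r`
active steps (`Σ Len ≤ r`).  Batch `i` is good if `Len i ≥ K i / 2` and bad
otherwise.  Then (a) deterministically `Σ_{good} K i ≤ 2r`; and (b) if, conditioned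
on the outcomes of `B₁, …, B_{i−1}` (a filtration `𝓕`), the probability that `Bᵢ` is
bad with `K i = k` is at most `C/k^p` (a `1/poly(k)` bound), then with high
probability in `n` (failure probability `≤ n^{−γ}` for a `γ` of our choice),
`Σ_{bad} K i ≤ O(n + r)`. -/
theorem good_and_bad_batches :
    ∀ γ : ℝ, 0 < γ → ∀ C p : ℝ, 0 < C → 3 ≤ p →
    ∃ K₀ : ℝ, 0 < K₀ ∧ ∃ N₀ : ℕ, ∀ n : ℕ, N₀ ≤ n →
    ∀ (Ω : Type) (mΩ : MeasurableSpace Ω) (μ : Measure Ω), IsProbabilityMeasure μ →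
    ∀ (r : ℕ) (b : ℕ), b ≤ n →  -- at most `n` batches
    ∀ (K Len : Fin b → Ω → ℕ),
    (∀ i, Measurable (K i)) → (∀ i, Measurable (Len i)) →
    (∀ i ω, K i ω ≤ n) →
    (∀ ω, ∑ i, Len i ω ≤ r) →
    ∀ (𝓕 : Filtration ℕ mΩ),
    (∀ i : Fin b, Measurable[𝓕 (i + 1)] (K i) ∧ Measurable[𝓕 (i + 1)] (Len i)) →
    (∀ (i : Fin b) (k : ℕ), 1 ≤ k →
      μ[Set.indicator {ω | K i ω = k ∧ 2 * Len i ω < K i ω} (fun _ => (1 : ℝ))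
          | 𝓕 i] ≤ᵐ[μ] fun _ => C / (k : ℝ) ^ p) →
    -- (a) good batches
    (∀ ω, ∑ i, (if K i ω ≤ 2 * Len i ω then (K i ω : ℝ) else 0) ≤ 2 * r) ∧
    -- (b) bad batches
    μ {ω | K₀ * ((n : ℝ) + r) <
        ∑ i, (if 2 * Len i ω < K i ω then (K i ω : ℝ) else 0)} ≤
      ENNReal.ofReal ((n : ℝ) ^ (-γ)) := by
  intro γ hγ C p hC hp
  set e1 : ℝ := Real.exp 1 with he1
  have he1pos : 0 < e1 := Real.exp_pos 1
  refine ⟨γ + 2*e1*C + 9*C + 1, by positivity, 1728^4, ?_⟩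
  intro n hn Ω mΩ μ hμ r b hbn K Len hK hLen hKn hLenr 𝓕 h𝓕 hcond
  set K₀ : ℝ := γ + 2*e1*C + 9*C + 1 with hK₀
  have hK₀pos : 0 < K₀ := by positivity
  -- basic facts about n
  have hn2 : 2 ≤ n := le_trans (by norm_num) hn
  have hn0 : (0:ℝ) < n := by
    have : 0 < n := by omega
    exact_mod_cast this
  have hn1 : (1:ℝ) ≤ n := by exact_mod_cast (by omega : 1 ≤ n)
  have hn3 : (3:ℝ) ≤ n := by
    have : 3 ≤ n := le_trans (by norm_num) hn
    exact_mod_cast this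
  set L : ℝ := Real.log n with hLdef
  have hexpL : Real.exp L = n := Real.exp_log hn0
  have hL1 : 1 ≤ L := by
    rw [hLdef, Real.le_log_iff_exp_le hn0]
    calc Real.exp 1 ≤ 2.7182818286 := (Real.exp_one_lt_d9).le
    _ ≤ n := by linarith
  have hL0 : 0 < L := lt_of_lt_of_le one_pos hL1
  have hsqrt_pos : 0 < Real.sqrt n := Real.sqrt_pos.mpr hn0
  have hL3 : L^3 ≤ Real.sqrt n := by
    have h12 : L ≤ 12 * (n:ℝ) ^ ((1:ℝ)/12) := by
      have := Real.log_le_rpow_div (le_of_lt hn0) (by norm_num : (0:ℝ) < 1/12)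
      calc L ≤ (n:ℝ) ^ ((1:ℝ)/12) / (1/12) := this
      _ = 12 * (n:ℝ) ^ ((1:ℝ)/12) := by ring
    have hr0 : (0:ℝ) ≤ (n:ℝ) ^ ((1:ℝ)/12) := Real.rpow_nonneg hn0.le _
    have hcube : L^3 ≤ 1728 * (n:ℝ) ^ ((1:ℝ)/4) := by
      have : L^3 ≤ (12 * (n:ℝ) ^ ((1:ℝ)/12))^3 :=
        pow_le_pow_left₀ hL0.le h12 3
      calc L^3 ≤ (12 * (n:ℝ) ^ ((1:ℝ)/12))^3 := this
      _ = 1728 * ((n:ℝ) ^ ((1:ℝ)/12))^3 := by ring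
      _ = 1728 * (n:ℝ) ^ ((1:ℝ)/4) := by
          rw [← Real.rpow_natCast ((n:ℝ) ^ ((1:ℝ)/12)) 3, ← Real.rpow_mul hn0.le]
          norm_num
    have h1728 : (1728:ℝ) ≤ (n:ℝ) ^ ((1:ℝ)/4) := by
      have hbase : ((1728:ℝ)^(4:ℕ)) ≤ (n:ℝ) := by
        have : ((1728^4 : ℕ) : ℝ) ≤ n := by exact_mod_cast hn
        push_cast at this
        exact_mod_cast this
      calc (1728:ℝ) = ((1728:ℝ)^(4:ℕ)) ^ ((1:ℝ)/4) := by
            rw [← Real.rpow_natCast (1728:ℝ) 4, ← Real.rpow_mul (by norm_num)]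
            norm_num
      _ ≤ (n:ℝ) ^ ((1:ℝ)/4) := Real.rpow_le_rpow (by positivity) hbase (by norm_num)
    calc L^3 ≤ 1728 * (n:ℝ) ^ ((1:ℝ)/4) := hcube
    _ ≤ (n:ℝ) ^ ((1:ℝ)/4) * (n:ℝ) ^ ((1:ℝ)/4) := by
        have hr4 : (0:ℝ) ≤ (n:ℝ) ^ ((1:ℝ)/4) := Real.rpow_nonneg hn0.le _
        nlinarith [h1728]
    _ = (n:ℝ) ^ ((1:ℝ)/2) := by
        rw [← Real.rpow_add hn0]; norm_num
    _ = Real.sqrt n := (Real.sqrt_eq_rpow _).symm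
  set lam : ℝ := L / n with hlamdef
  have hlam0 : 0 < lam := div_pos hL0 hn0
  have hlamn : lam * n = L := div_mul_cancel₀ L (ne_of_gt hn0)
  constructor
  · -- part (a)
    intro ω
    have step : ∀ i : Fin b, (if K i ω ≤ 2 * Len i ω then (K i ω : ℝ) else 0)
        ≤ 2 * (Len i ω : ℝ) := by
      intro i
      split_ifs with h
      · exact_mod_cast h
      · positivity
    calc ∑ i, (if K i ω ≤ 2 * Len i ω then (K i ω : ℝ) else 0)
        ≤ ∑ i, 2 * (Len i ω : ℝ) := Finset.sum_le_sum (fun i _ => step i)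
    _ = 2 * ((∑ i, Len i ω : ℕ) : ℝ) := by push_cast; rw [Finset.mul_sum]
    _ ≤ 2 * r := by
        have := hLenr ω
        have : ((∑ i, Len i ω : ℕ) : ℝ) ≤ r := by exact_mod_cast this
        linarith
  · -- part (b)
    classical
    set S : ℝ := ∑ k ∈ Finset.Icc 1 n, (Real.exp (lam * k) - 1) * (C / (k:ℝ) ^ p) with hSdef
    set D : ℝ := 1 + S with hDdef
    have hterm_nonneg : ∀ k ∈ Finset.Icc 1 n,
        0 ≤ (Real.exp (lam * k) - 1) * (C / (k:ℝ) ^ p) := by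
      intro k hk
      have h1 : (1:ℝ) ≤ Real.exp (lam * k) := Real.one_le_exp (by positivity)
      have h2 : (0:ℝ) ≤ C / (k:ℝ) ^ p :=
        div_nonneg hC.le (Real.rpow_nonneg (Nat.cast_nonneg k) p)
      nlinarith
    have hS0 : 0 ≤ S := Finset.sum_nonneg hterm_nonneg
    have hD1 : 1 ≤ D := by rw [hDdef]; linarith
    -- conditional bound
    have hcondf : ∀ i : Fin b, μ[expX K Len lam i | 𝓕 (i:ℕ)] ≤ᵐ[μ] fun _ => D :=
      fun i => condexp_expX_le hC hlam0.le i (hK i) (hLen i) (fun ω => hKn i ω)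
        (fun k hk => hcond i k hk)
    have hfm : ∀ i : Fin b, Measurable[𝓕 ((i:ℕ)+1)] (expX K Len lam i) :=
      fun i => expX_measurable (h𝓕 i).1 (h𝓕 i).2
    have hfB : ∀ (i : Fin b) ω, expX K Len lam i ω ≤ (n:ℝ) := by
      intro i ω
      unfold expX
      calc Real.exp (lam * badX K Len i ω) ≤ Real.exp (lam * n) := by
            apply Real.exp_le_exp.mpr
            apply mul_le_mul_of_nonneg_left _ hlam0.le
            unfold badX
            split_ifs with h
            · exact_mod_cast hKn i ω
            · positivity
      _ = n := by rw [hlamn, hexpL]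
    have hintP : ∫ ω, prodF (expX K Len lam) b ω ∂μ ≤ D ^ b :=
      integral_prodF_le hD1 hn1 hfm (one_le_expX hlam0.le) hfB hcondf b
    -- the prodF is measurable/integrable and ≥ 1
    have hPmeas : Measurable (prodF (expX K Len lam) b) := by
      unfold prodF
      apply Finset.measurable_prod
      intro i _
      exact (expX_measurable (hK i) (hLen i))
    have hP1 : ∀ ω, 1 ≤ prodF (expX K Len lam) b ω := by
      intro ω; unfold prodF
      calc (1:ℝ) = ∏ _i ∈ Finset.univ.filter (fun i : Fin b => (i:ℕ) < b), (1:ℝ) :=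
            (Finset.prod_const_one).symm
      _ ≤ _ := Finset.prod_le_prod (fun _ _ => zero_le_one)
            (fun i _ => one_le_expX hlam0.le i ω)
    have hPB : ∀ ω, prodF (expX K Len lam) b ω ≤ (n:ℝ) ^ b := by
      intro ω; unfold prodF
      calc ∏ i ∈ Finset.univ.filter (fun i : Fin b => (i:ℕ) < b), expX K Len lam i ω
          ≤ ∏ _i ∈ Finset.univ.filter (fun i : Fin b => (i:ℕ) < b), (n:ℝ) :=
            Finset.prod_le_prod (fun i _ => le_trans zero_le_one (one_le_expX hlam0.le i ω))
              (fun i _ => hfB i ω)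
      _ = (n:ℝ) ^ (Finset.univ.filter (fun i : Fin b => (i:ℕ) < b)).card :=
            Finset.prod_const _
      _ ≤ (n:ℝ) ^ b := pow_le_pow_right₀ hn1
            (le_trans (Finset.card_filter_le _ _) (by simp))
    have hPint : Integrable (prodF (expX K Len lam) b) μ := by
      refine Integrable.mono' (integrable_const ((n:ℝ) ^ b)) hPmeas.aestronglyMeasurable
        (ae_of_all _ fun ω => ?_)
      rw [Real.norm_eq_abs, abs_of_nonneg (le_trans zero_le_one (hP1 ω))]
      exact hPB ω
    -- Markov / Chernoff
    set ε₀ : ℝ := Real.exp (K₀ * L) with hε₀def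
    have hε₀pos : 0 < ε₀ := Real.exp_pos _
    have hsub : {ω | K₀ * ((n : ℝ) + r) <
          ∑ i, (if 2 * Len i ω < K i ω then (K i ω : ℝ) else 0)}
        ⊆ {ω | ε₀ ≤ prodF (expX K Len lam) b ω} := by
      intro ω hω
      simp only [Set.mem_setOf_eq] at hω ⊢
      have hsumX : ∑ i, badX K Len i ω
          = ∑ i, (if 2 * Len i ω < K i ω then (K i ω : ℝ) else 0) := rfl
      have h1 : K₀ * n ≤ K₀ * ((n:ℝ) + r) := by
        have : (0:ℝ) ≤ r := Nat.cast_nonneg r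
        nlinarith
      have h2 : K₀ * n ≤ ∑ i, badX K Len i ω := by
        rw [hsumX]; linarith
      have hPb : prodF (expX K Len lam) b ω = Real.exp (lam * ∑ i, badX K Len i ω) := by
        unfold prodF expX
        rw [Finset.filter_true_of_mem (fun i _ => i.isLt), Finset.mul_sum, Real.exp_sum]
      rw [hPb, hε₀def]
      apply Real.exp_le_exp.mpr
      calc K₀ * L = K₀ * (lam * n) := by rw [hlamn]
      _ = lam * (K₀ * n) := by ring
      _ ≤ lam * ∑ i, badX K Len i ω := mul_le_mul_of_nonneg_left h2 hlam0.le
    have hmark := mul_meas_ge_le_integral_of_nonneg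
      (ae_of_all μ fun ω => le_trans zero_le_one (hP1 ω)) hPint ε₀
    -- numeric estimate on n * S
    have hperk : ∀ k ∈ Finset.Icc 1 n, (Real.exp (lam * k) - 1) * (C / (k:ℝ)^p)
        ≤ e1*C*lam * (1/(k:ℝ)^2) + C*L^3/((n:ℝ)^2*Real.sqrt n) + 8*C/(n:ℝ)^2 := by
      intro k hk
      obtain ⟨hk1, hkn⟩ := Finset.mem_Icc.mp hk
      have hk1' : (1:ℝ) ≤ k := by exact_mod_cast hk1
      have hk0 : (0:ℝ) < k := lt_of_lt_of_le one_pos hk1'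
      have hkn' : (k:ℝ) ≤ n := by exact_mod_cast hkn
      have hkp3 : (k:ℝ)^(3:ℕ) ≤ (k:ℝ)^p := by
        rw [← Real.rpow_natCast (k:ℝ) 3]
        apply Real.rpow_le_rpow_of_exponent_le hk1'
        push_cast
        exact hp
      have hkppos : (0:ℝ) < (k:ℝ)^p := Real.rpow_pos_of_pos hk0 p
      have hCk : C/(k:ℝ)^p ≤ C/(k:ℝ)^3 := by
        apply div_le_div_of_nonneg_left hC.le (by positivity) hkp3
      have hCp0 : 0 ≤ C/(k:ℝ)^p := le_of_lt (div_pos hC hkppos)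
      have ht1 : 0 ≤ e1*C*lam * (1/(k:ℝ)^2) := by positivity
      have ht2 : 0 ≤ C*L^3/((n:ℝ)^2*Real.sqrt n) := by positivity
      have ht3 : 0 ≤ 8*C/(n:ℝ)^2 := by positivity
      by_cases hcase1 : lam * k ≤ 1
      · have hexp : Real.exp (lam*k) ≤ e1 := by
          rw [he1]; exact Real.exp_le_exp.mpr hcase1
        have h1 : Real.exp (lam*(k:ℝ)) - 1 ≤ lam*k*e1 := by
          have h0 := exp_sub_one_le_mul (lam*(k:ℝ))
          have hmk : 0 ≤ lam * (k:ℝ) := by positivity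
          nlinarith [Real.exp_pos (lam*(k:ℝ))]
        have hmain : (Real.exp (lam * k) - 1) * (C / (k:ℝ)^p) ≤ (lam*k*e1) * (C/(k:ℝ)^3) := by
          apply mul_le_mul h1 hCk hCp0 (by positivity)
        have heq : (lam*(k:ℝ)*e1) * (C/(k:ℝ)^3) = e1*C*lam * (1/(k:ℝ)^2) := by
          field_simp
        rw [heq] at hmain
        linarith
      · push_neg at hcase1
        by_cases hcase2 : 2*(k:ℝ) ≤ n
        · have hexp : Real.exp (lam * k) ≤ Real.sqrt n := by
            have h2 : lam * k ≤ L/2 := by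
              have hhalf : (k:ℝ) ≤ (n:ℝ)/2 := by linarith
              calc lam * k ≤ lam * ((n:ℝ)/2) := mul_le_mul_of_nonneg_left hhalf hlam0.le
              _ = L/2 := by rw [← hlamn]; ring
            have hsq : Real.sqrt n = Real.exp (L/2) := by
              rw [show (n:ℝ) = Real.exp (L/2) * Real.exp (L/2) by
                    rw [← Real.exp_add, show L/2+L/2 = L by ring, hexpL]]
              exact Real.sqrt_mul_self (Real.exp_pos _).le
            rw [hsq]
            exact Real.exp_le_exp.mpr h2
          have hinv : C/(k:ℝ)^3 ≤ C * lam^3 := by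
            have h3 : (1:ℝ) ≤ (lam*k)^3 := one_le_pow₀ hcase1.le
            have hdiv : 1/(k:ℝ)^3 ≤ lam^3 := by
              rw [div_le_iff₀ (by positivity)]
              calc (1:ℝ) ≤ (lam*k)^3 := h3
              _ = lam^3 * (k:ℝ)^3 := by ring
            calc C/(k:ℝ)^3 = C * (1/(k:ℝ)^3) := by ring
            _ ≤ C * lam^3 := mul_le_mul_of_nonneg_left hdiv hC.le
          have hmain : (Real.exp (lam*k) - 1) * (C/(k:ℝ)^p)
              ≤ Real.sqrt n * (C * lam^3) := by
            apply mul_le_mul (by linarith) (le_trans hCk hinv) hCp0 hsqrt_pos.le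
          have heq : Real.sqrt n * (C * lam^3) = C*L^3/((n:ℝ)^2*Real.sqrt n) := by
            have hs : Real.sqrt n * Real.sqrt n = n := Real.mul_self_sqrt hn0.le
            rw [hlamdef]
            rw [eq_div_iff (by positivity)]
            calc Real.sqrt n * (C * (L / n)^3) * ((n:ℝ)^2 * Real.sqrt n)
                = C*L^3*((Real.sqrt n * Real.sqrt n) * (n:ℝ)^2 / (n:ℝ)^3) := by ring
            _ = C*L^3 := by
                rw [hs, show (n:ℝ)*(n:ℝ)^2 = (n:ℝ)^3 by ring, div_self (by positivity), mul_one]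
          rw [heq] at hmain
          linarith
        · push_neg at hcase2
          have hexp : Real.exp (lam*k) ≤ n := by
            calc Real.exp (lam*k) ≤ Real.exp (lam*n) :=
              Real.exp_le_exp.mpr (mul_le_mul_of_nonneg_left hkn' hlam0.le)
            _ = n := by rw [hlamn, hexpL]
          have hinv : C/(k:ℝ)^3 ≤ 8*C/(n:ℝ)^3 := by
            rw [div_le_div_iff₀ (by positivity) (by positivity)]
            have hcube : (n:ℝ)^3 ≤ (2*(k:ℝ))^3 := pow_le_pow_left₀ hn0.le hcase2.le 3
            nlinarith [hcube, hC]
          have hmain : (Real.exp (lam*k) - 1) * (C/(k:ℝ)^p) ≤ (n:ℝ) * (8*C/(n:ℝ)^3) := by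
            apply mul_le_mul (by linarith) (le_trans hCk hinv) hCp0 hn0.le
          have heq : (n:ℝ) * (8*C/(n:ℝ)^3) = 8*C/(n:ℝ)^2 := by
            field_simp
          rw [heq] at hmain
          linarith
    have hcard : (Finset.Icc 1 n).card = n := by
      rw [Nat.card_Icc]
      omega
    have hSle : S ≤ e1*C*lam*2 + (n:ℝ)*(C*L^3/((n:ℝ)^2*Real.sqrt n)) + (n:ℝ)*(8*C/(n:ℝ)^2) := by
      calc S ≤ ∑ k ∈ Finset.Icc 1 n,
            (e1*C*lam * (1/(k:ℝ)^2) + C*L^3/((n:ℝ)^2*Real.sqrt n) + 8*C/(n:ℝ)^2) :=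
          Finset.sum_le_sum hperk
      _ = e1*C*lam * (∑ k ∈ Finset.Icc 1 n, 1/(k:ℝ)^2)
            + (n:ℝ)*(C*L^3/((n:ℝ)^2*Real.sqrt n)) + (n:ℝ)*(8*C/(n:ℝ)^2) := by
          rw [Finset.sum_add_distrib, Finset.sum_add_distrib, Finset.sum_const,
            Finset.sum_const, ← Finset.mul_sum, hcard]
          simp [nsmul_eq_mul]
      _ ≤ e1*C*lam*2 + (n:ℝ)*(C*L^3/((n:ℝ)^2*Real.sqrt n)) + (n:ℝ)*(8*C/(n:ℝ)^2) := by
          have hs2 := sum_inv_sq n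
          have : e1*C*lam * (∑ k ∈ Finset.Icc 1 n, 1/(k:ℝ)^2) ≤ e1*C*lam*2 :=
            mul_le_mul_of_nonneg_left hs2 (by positivity)
          linarith
    have hnS : (n:ℝ) * S ≤ (2*e1*C + 9*C + 1) * L := by
      have h2 : (n:ℝ) * (e1*C*lam*2) = 2*e1*C*L := by
        rw [hlamdef]; field_simp
      have h3 : (n:ℝ) * ((n:ℝ)*(C*L^3/((n:ℝ)^2*Real.sqrt n))) = C*(L^3/Real.sqrt n) := by
        field_simp
      have h4 : (n:ℝ) * ((n:ℝ)*(8*C/(n:ℝ)^2)) = 8*C := by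
        field_simp
      have h5 : L^3/Real.sqrt n ≤ 1 := (div_le_one hsqrt_pos).mpr hL3
      have h6 : (n:ℝ) * S ≤ (n:ℝ) * (e1*C*lam*2 + (n:ℝ)*(C*L^3/((n:ℝ)^2*Real.sqrt n))
          + (n:ℝ)*(8*C/(n:ℝ)^2)) := mul_le_mul_of_nonneg_left hSle hn0.le
      have h7 : (n:ℝ) * (e1*C*lam*2 + (n:ℝ)*(C*L^3/((n:ℝ)^2*Real.sqrt n))
          + (n:ℝ)*(8*C/(n:ℝ)^2)) = 2*e1*C*L + C*(L^3/Real.sqrt n) + 8*C := by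
        rw [mul_add, mul_add, h2, h3, h4]
      rw [h7] at h6
      have h8 : C*(L^3/Real.sqrt n) ≤ C := by
        nlinarith
      nlinarith [hC.le, hL1]
    -- final assembly
    have hDb : (∫ ω, prodF (expX K Len lam) b ω ∂μ) ≤ Real.exp ((n:ℝ) * S) := by
      have hD0 : (0:ℝ) ≤ D := le_trans zero_le_one hD1
      calc (∫ ω, prodF (expX K Len lam) b ω ∂μ) ≤ D ^ b := hintP
      _ ≤ (Real.exp S) ^ b := by
          apply pow_le_pow_left₀ hD0
          rw [hDdef]
          linarith [Real.add_one_le_exp S]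
      _ = Real.exp ((b:ℕ) * S) := (Real.exp_nat_mul S b).symm
      _ ≤ Real.exp ((n:ℝ) * S) := by
          apply Real.exp_le_exp.mpr
          have hbn' : ((b:ℕ):ℝ) ≤ n := by exact_mod_cast hbn
          nlinarith
    have htoReal : (μ {ω | K₀ * ((n : ℝ) + r) <
          ∑ i, (if 2 * Len i ω < K i ω then (K i ω : ℝ) else 0)}).toReal
        ≤ Real.exp ((n:ℝ) * S - K₀ * L) := by
      have hmono := μ.mono hsub
      have h1 : (μ {ω | K₀ * ((n : ℝ) + r) <
            ∑ i, (if 2 * Len i ω < K i ω then (K i ω : ℝ) else 0)}).toReal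
          ≤ (μ {ω | ε₀ ≤ prodF (expX K Len lam) b ω}).toReal :=
        ENNReal.toReal_mono (measure_ne_top μ _) hmono
      have h2 : (μ {ω | ε₀ ≤ prodF (expX K Len lam) b ω}).toReal
          ≤ (∫ ω, prodF (expX K Len lam) b ω ∂μ) / ε₀ := by
        rw [le_div_iff₀ hε₀pos]
        calc (μ {ω | ε₀ ≤ prodF (expX K Len lam) b ω}).toReal * ε₀
            = ε₀ * (μ {ω | ε₀ ≤ prodF (expX K Len lam) b ω}).toReal := by ring
        _ ≤ _ := hmark
      have h3 : (∫ ω, prodF (expX K Len lam) b ω ∂μ) / ε₀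
          ≤ Real.exp ((n:ℝ) * S) / ε₀ := by
        gcongr
      have h4 : Real.exp ((n:ℝ) * S) / ε₀ = Real.exp ((n:ℝ) * S - K₀ * L) := by
        rw [hε₀def, ← Real.exp_sub]
      calc (μ {ω | K₀ * ((n : ℝ) + r) <
            ∑ i, (if 2 * Len i ω < K i ω then (K i ω : ℝ) else 0)}).toReal
          ≤ (μ {ω | ε₀ ≤ prodF (expX K Len lam) b ω}).toReal := h1
      _ ≤ (∫ ω, prodF (expX K Len lam) b ω ∂μ) / ε₀ := h2
      _ ≤ Real.exp ((n:ℝ) * S) / ε₀ := h3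
      _ = Real.exp ((n:ℝ) * S - K₀ * L) := h4
    have hexp_le : Real.exp ((n:ℝ) * S - K₀ * L) ≤ (n:ℝ) ^ (-γ) := by
      have h5 : (n:ℝ) * S - K₀ * L ≤ -γ * L := by
        rw [hK₀]
        nlinarith [hnS]
      calc Real.exp ((n:ℝ) * S - K₀ * L) ≤ Real.exp (-γ * L) := Real.exp_le_exp.mpr h5
      _ = (n:ℝ) ^ (-γ) := by
          rw [Real.rpow_def_of_pos hn0, hLdef]
          congr 1
          ring
    have hfin := le_trans htoReal hexp_le
    rw [← ENNReal.ofReal_toReal (measure_ne_top μ {ω | K₀ * ((n : ℝ) + r) <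
        ∑ i, (if 2 * Len i ω < K i ω then (K i ω : ℝ) else 0)})]
    exact ENNReal.ofReal_le_ofReal hfin
end

section
/- Consider a batch operation with k participants, each of whom (until succeeding) broadcasts at step i of the batch with probability 1/i on one channel and with probability (c₂ log i)/i on the other channel. Then within the first T = O(n) steps of the batch, the number of broadcast attempts by participants is stochastically dominated by a sum of independent indicator variables with total mean O(k · log² n); hence by a Chernoff bound, with high probability in n the total number of broadcast attempts by the k participants within the first T steps is O(k · log² n). -/
set_option maxHeartbeats 1000000

open MeasureTheory ProbabilityTheory

/-- In a batch operation with `k` participants, each participant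
(until succeeding) broadcasts at step `i` with probability `1/i` on one channel and
`(c₂ log i)/i` on the other, so the attempts are dominated by independent indicators
`Y (p, i)` with `Pr[Y (p,i)] ≤ (1 + c₂·log i)/i`.  Within the first `T = O(n)` steps
the dominating sum has mean `O(k·log² n)`, so by a Chernoff bound, with high
probability in `n` (failure probability `≤ n^{−γ}` for a `γ` of our choice), the
total number of broadcast attempts by the `k` participants is `O(k·log² n)`. -/
theorem batch_broadcast_attempts :
    ∀ γ : ℝ, 0 < γ → ∀ c₂ C : ℝ, 0 < c₂ → 0 < C →
    ∃ Kc : ℝ, 0 < Kc ∧ ∃ N₀ : ℕ, ∀ n : ℕ, N₀ ≤ n →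
    ∀ T k : ℕ, (T : ℝ) ≤ C * n → 1 ≤ k → k ≤ n →
    ∀ (Ω : Type) (_ : MeasurableSpace Ω) (μ : Measure Ω), IsProbabilityMeasure μ →
    ∀ Y : Fin k × ℕ → Ω → Bool,
    (∀ q, Measurable (Y q)) →
    iIndepFun Y μ →
    (∀ (p : Fin k) (i : ℕ), 1 ≤ i → i ≤ T →
      μ {ω | Y (p, i) ω = true} ≤
        ENNReal.ofReal ((1 + c₂ * Real.log i) / i)) →
    ∀ A : Ω → ℕ,  -- the actual number of broadcast attempts
    (∀ ω, (A ω : ℝ) ≤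
      ∑ p : Fin k, ∑ i ∈ Finset.Icc 1 T, (if Y (p, i) ω then (1 : ℝ) else 0)) →
    μ {ω | Kc * k * (Real.log n) ^ 2 < (A ω : ℝ)} ≤
      ENNReal.ofReal ((n : ℝ) ^ (-γ)) := by
  intro γ hγ c₂ C hc₂ hC
  set e1 : ℝ := Real.exp 1 with he1
  have he11 : (1:ℝ) ≤ e1 - 1 := by
    have := Real.add_one_le_exp (1:ℝ); rw [he1]; linarith
  refine ⟨3 * (e1 - 1) * (1 + 2 * c₂) + γ, by nlinarith,
    ⌈e1⌉₊ + ⌈1 / C⌉₊ + ⌈C⌉₊ + 3, ?_⟩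
  intro n hn T k hT hk1 hkn Ω mΩ μ hμ Y hYm hYi hYp A hA
  set Kc : ℝ := 3 * (e1 - 1) * (1 + 2 * c₂) + γ with hKc
  set L : ℝ := Real.log n with hL
  have hn3 : (3 : ℕ) ≤ n := by omega
  have hn0 : (0 : ℝ) < n := by positivity
  have hne : e1 ≤ n := le_trans (Nat.le_ceil _) (by exact_mod_cast by omega)
  have hnC : C ≤ n := le_trans (Nat.le_ceil _) (by exact_mod_cast by omega)
  have hnCi : 1 / C ≤ n := le_trans (Nat.le_ceil _) (by exact_mod_cast by omega)
  have hCn1 : (1 : ℝ) ≤ C * n := by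
    rw [div_le_iff₀ hC] at hnCi; linarith [hnCi]
  have hCn0 : (0 : ℝ) < C * n := by positivity
  have hL1 : 1 ≤ L := by
    have := Real.log_le_log (Real.exp_pos 1) hne
    rwa [Real.log_exp] at this
  have hL0 : 0 < L := lt_of_lt_of_le one_pos hL1
  set D : ℝ := Real.log (C * n) with hD
  have hD0 : 0 ≤ D := Real.log_nonneg hCn1
  have hD2L : D ≤ 2 * L := by
    have : D = Real.log C + Real.log n := Real.log_mul (ne_of_gt hC) (ne_of_gt hn0)
    have hlogC : Real.log C ≤ L := Real.log_le_log hC hnC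
    linarith
  -- the dominating indicator variables
  set X : Fin k × ℕ → Ω → ℝ := fun q ω => if Y q ω then 1 else 0 with hX
  have hXm : ∀ q, Measurable (X q) := fun q =>
    (measurable_of_finite (fun b : Bool => if b then (1 : ℝ) else 0)).comp (hYm q)
  have hX01 : ∀ q ω, 0 ≤ X q ω ∧ X q ω ≤ 1 := by
    intro q ω; simp only [hX]; split <;> norm_num
  have hXi : iIndepFun X μ :=
    hYi.comp (fun q b => if b then (1 : ℝ) else 0) fun q => measurable_of_finite _
  set s : Finset (Fin k × ℕ) := Finset.univ ×ˢ Finset.Icc 1 T with hs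
  set S : Ω → ℝ := ∑ q ∈ s, X q with hSdef
  have hSof : ∀ ω, S ω = ∑ q ∈ s, X q ω := by
    intro ω; simp [hSdef, Finset.sum_apply]
  have hAS : ∀ ω, (A ω : ℝ) ≤ S ω := by
    intro ω
    rw [hSof, hs, Finset.sum_product]
    exact hA ω
  -- integrability of exp(1 * X q)
  have hint : ∀ q, Integrable (fun ω => Real.exp (1 * X q ω)) μ := by
    intro q
    refine (integrable_const e1).mono'
      (((hXm q).const_mul 1).exp.aestronglyMeasurable) ?_
    filter_upwards with ω
    rw [Real.norm_eq_abs, abs_of_pos (Real.exp_pos _), one_mul, he1]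
    exact Real.exp_le_exp.2 (hX01 q ω).2
  -- probability of each indicator
  set p : Fin k × ℕ → ℝ := fun q => (μ {ω | Y q ω = true}).toReal with hp
  have hp0 : ∀ q, 0 ≤ p q := fun q => ENNReal.toReal_nonneg
  have hmgf : ∀ q, mgf (X q) μ 1 = 1 + (e1 - 1) * p q := by
    intro q
    have hmeas : MeasurableSet {ω | Y q ω = true} :=
      hYm q (measurableSet_singleton true)
    have heq : (fun ω => Real.exp (1 * X q ω)) =
        fun ω => 1 + (e1 - 1) * Set.indicator {ω | Y q ω = true} (fun _ => (1:ℝ)) ω := by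
      funext ω
      by_cases h : Y q ω = true
      · simp [hX, h, Set.indicator_of_mem, Set.mem_setOf_eq, he1]
      · simp [hX, h, Set.indicator_of_notMem, Set.mem_setOf_eq]
    rw [mgf, heq]
    have hind : Integrable (Set.indicator {ω | Y q ω = true} (fun _ => (1:ℝ))) μ := by
      apply (integrable_const (1:ℝ)).indicator hmeas
    rw [integral_add (integrable_const 1) (hind.const_mul _), integral_const,
      integral_const_mul, integral_indicator_const (1:ℝ) hmeas]
    simp [hp, measure_univ, Measure.real]
  have hmgf_le : ∀ q, mgf (X q) μ 1 ≤ Real.exp ((e1 - 1) * p q) := by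
    intro q
    rw [hmgf q, add_comm]
    exact Real.add_one_le_exp _
  -- total mean bound
  set H : ℝ := ∑ i ∈ Finset.Icc 1 T, (i : ℝ)⁻¹ with hH
  have hH0 : 0 ≤ H := Finset.sum_nonneg fun i _ => by positivity
  have hHb : H ≤ 1 + D := by
    rcases Nat.eq_zero_or_pos T with hT0 | hT1
    · have hH0' : H = 0 := by rw [hH, hT0]; simp
      rw [hH0']; linarith
    · have h1 : H = (harmonic T : ℝ) := by
        rw [hH, harmonic_eq_sum_Icc]; push_cast; ring
      have h2 : (harmonic T : ℝ) ≤ 1 + Real.log T := harmonic_le_one_add_log T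
      have h3 : Real.log T ≤ D := by
        apply Real.log_le_log (by exact_mod_cast hT1) hT
      linarith
  set M : ℝ := ∑ q ∈ s, p q with hM
  have hMb : M ≤ 3 * (1 + 2 * c₂) * k * L ^ 2 := by
    have hterm : ∀ q ∈ s, p q ≤ (1 + c₂ * D) * (q.2 : ℝ)⁻¹ := by
      rintro ⟨pp, i⟩ hq
      simp only [hs, Finset.mem_product, Finset.mem_Icc] at hq
      obtain ⟨-, hi1, hiT⟩ := hq
      have hi0 : (0 : ℝ) < i := by exact_mod_cast hi1
      have hlogi : Real.log i ≤ D := by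
        apply Real.log_le_log hi0
        calc (i : ℝ) ≤ T := by exact_mod_cast hiT
          _ ≤ C * n := hT
      have h1 : p (pp, i) ≤ (1 + c₂ * Real.log i) / i := by
        have hle := hYp pp i hi1 hiT
        have hnum : 0 ≤ (1 + c₂ * Real.log i) / i := by
          have : 0 ≤ Real.log i := Real.log_natCast_nonneg i
          positivity
        rw [hp]
        calc (μ {ω | Y (pp, i) ω = true}).toReal
            ≤ (ENNReal.ofReal ((1 + c₂ * Real.log i) / i)).toReal :=
              ENNReal.toReal_mono ENNReal.ofReal_ne_top hle
          _ = (1 + c₂ * Real.log i) / i := ENNReal.toReal_ofReal hnum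
      calc p (pp, i) ≤ (1 + c₂ * Real.log i) / i := h1
        _ ≤ (1 + c₂ * D) * (i : ℝ)⁻¹ := by
            rw [div_eq_mul_inv]
            gcongr
    have hsum : M ≤ (k : ℝ) * ((1 + c₂ * D) * H) := by
      calc M ≤ ∑ q ∈ s, (1 + c₂ * D) * (q.2 : ℝ)⁻¹ := Finset.sum_le_sum hterm
        _ = (k : ℝ) * ((1 + c₂ * D) * H) := by
            rw [hs, Finset.sum_product]
            have hx : ∀ x : Fin k,
                (∑ y ∈ Finset.Icc 1 T, (1 + c₂ * D) * (((x, y) : Fin k × ℕ).2 : ℝ)⁻¹)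
                  = (1 + c₂ * D) * H := by
              intro x; rw [hH, Finset.mul_sum]
            rw [Finset.sum_congr rfl fun x _ => hx x, Finset.sum_const,
              Finset.card_univ, Fintype.card_fin, nsmul_eq_mul]
    have hfac1 : 1 + c₂ * D ≤ (1 + 2 * c₂) * L := by nlinarith
    have hfac2 : 1 + D ≤ 3 * L := by nlinarith
    have hk0 : (1 : ℝ) ≤ k := by exact_mod_cast hk1
    calc M ≤ (k : ℝ) * ((1 + c₂ * D) * H) := hsum
      _ ≤ (k : ℝ) * ((1 + 2 * c₂) * L * (3 * L)) := by
          have h1 : (1 + c₂ * D) * H ≤ ((1 + 2 * c₂) * L) * (3 * L) := by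
            apply mul_le_mul hfac1 (hHb.trans hfac2) hH0 (by positivity)
          have : (0:ℝ) ≤ (k:ℝ) := by positivity
          nlinarith
      _ = 3 * (1 + 2 * c₂) * k * L ^ 2 := by ring
  -- Chernoff bound
  set a : ℝ := Kc * k * L ^ 2 with ha
  have hSm : Measurable S := by
    have : S = fun ω => ∑ q ∈ s, X q ω := funext hSof
    rw [this]; exact Finset.measurable_sum s fun q _ => hXm q
  have hSint : Integrable (fun ω => Real.exp (1 * S ω)) μ := by
    refine (integrable_const (Real.exp (s.card : ℝ))).mono'
      ((hSm.const_mul 1).exp.aestronglyMeasurable) ?_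
    filter_upwards with ω
    rw [Real.norm_eq_abs, abs_of_pos (Real.exp_pos _), one_mul]
    apply Real.exp_le_exp.2
    rw [hSof]
    calc ∑ q ∈ s, X q ω ≤ ∑ q ∈ s, (1 : ℝ) :=
        Finset.sum_le_sum fun q _ => (hX01 q ω).2
      _ = (s.card : ℝ) := by simp
  have hcher : (μ {ω | a ≤ S ω}).toReal ≤ Real.exp (-1 * a) * mgf S μ 1 :=
    measure_ge_le_exp_mul_mgf a zero_le_one hSint
  have hmgfS : mgf S μ 1 ≤ Real.exp ((e1 - 1) * M) := by
    rw [hSdef, hXi.mgf_sum hXm s]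
    calc ∏ q ∈ s, mgf (X q) μ 1 ≤ ∏ q ∈ s, Real.exp ((e1 - 1) * p q) := by
          apply Finset.prod_le_prod (fun q _ => mgf_nonneg) fun q _ => hmgf_le q
      _ = Real.exp (∑ q ∈ s, (e1 - 1) * p q) := by rw [Real.exp_sum]
      _ = Real.exp ((e1 - 1) * M) := by rw [hM, Finset.mul_sum]
  have hfinal : Real.exp (-1 * a) * mgf S μ 1 ≤ (n : ℝ) ^ (-γ) := by
    have h1 : Real.exp (-1 * a) * mgf S μ 1 ≤ Real.exp (-a + (e1 - 1) * M) := by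
      rw [Real.exp_add]
      have := Real.exp_pos (-1 * a)
      calc Real.exp (-1 * a) * mgf S μ 1
          ≤ Real.exp (-1 * a) * Real.exp ((e1 - 1) * M) := by
            apply mul_le_mul_of_nonneg_left hmgfS this.le
        _ = Real.exp (-a) * Real.exp ((e1 - 1) * M) := by norm_num
    have hk0 : (1 : ℝ) ≤ k := by exact_mod_cast hk1
    have h2 : -a + (e1 - 1) * M ≤ -γ * L := by
      have hM3 : (e1 - 1) * M ≤ (e1 - 1) * (3 * (1 + 2 * c₂) * k * L ^ 2) := by
        apply mul_le_mul_of_nonneg_left hMb (by linarith)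
      have hkL : L ≤ k * L ^ 2 := by nlinarith
      rw [ha, hKc]; nlinarith
    have h3 : Real.exp (-γ * L) = (n : ℝ) ^ (-γ) := by
      rw [Real.rpow_def_of_pos hn0, hL, mul_comm]
    calc Real.exp (-1 * a) * mgf S μ 1 ≤ Real.exp (-a + (e1 - 1) * M) := h1
      _ ≤ Real.exp (-γ * L) := Real.exp_le_exp.2 h2
      _ = (n : ℝ) ^ (-γ) := h3
  -- put everything together
  have hsub : {ω | Kc * k * (Real.log n) ^ 2 < (A ω : ℝ)} ⊆ {ω | a ≤ S ω} := by
    intro ω hω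
    simp only [Set.mem_setOf_eq] at hω ⊢
    exact le_trans (le_of_lt (by rwa [ha, hL])) (hAS ω)
  calc μ {ω | Kc * k * (Real.log n) ^ 2 < (A ω : ℝ)}
      ≤ μ {ω | a ≤ S ω} := measure_mono hsub
    _ = ENNReal.ofReal ((μ {ω | a ≤ S ω}).toReal) := by
        rw [ENNReal.ofReal_toReal (measure_ne_top μ _)]
    _ ≤ ENNReal.ofReal ((n : ℝ) ^ (-γ)) :=
        ENNReal.ofReal_le_ofReal (hcher.trans hfinal)
end
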